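/- arXiv:1705.09444 — 7 statements merged into one kernel-verified Lean document; each statement's English description precedes it below -/
import Mathlib

section
/- For two agents, better responses under sequential allocation can cycle: there exist a number of items m, a picking sequence π of length m, truthful preferences and utility functions u_1, u_2 for the two agents consistent with those preferences, and a finite sequence of reported preference profiles ≻^0, ≻^1, …, ≻^k with k ≥ 1 and ≻^k = ≻^0, such that for every t < k the profile ≻^{t+1} is obtained from ≻^t by changing exactly one agent's report to a better response for that agent. -/
open Finset

section SeqAlloc

variable {A : Type*} [DecidableEq A] {α : Type*} [DecidableEq α]

/-- One run of sequential allocation: the list of (agent, item) pick events.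
At each turn the scheduled agent receives his most preferred not-yet-taken item. -/
def SAevents (prefs : A → List α) : List A → List α → List (A × α)
  | [], _ => []
  | a :: rest, taken =>
    match ((prefs a).filter (fun o => !(taken.contains o))).head? with
    | some o => (a, o) :: SAevents prefs rest (o :: taken)
    | none => SAevents prefs rest taken

/-- The order in which items are picked under picking sequence `π` and reports `prefs`. -/
def pickOrder (π : List A) (prefs : A → List α) : List α :=
  (SAevents prefs π []).map Prod.snd

/-- The set of items that agent `i` receives. -/
def SAalloc (π : List A) (prefs : A → List α) (i : A) : Finset α :=
  (((SAevents prefs π []).filter (fun p => p.1 == i)).map Prod.snd).toFinset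

/-- A valid ranking (strict total order) on the items, given as an ordered list of all items. -/
def IsRanking [Fintype α] (L : List α) : Prop := L.Nodup ∧ ∀ o : α, o ∈ L

/-- `o` is strictly preferred to `o'` according to ranking `L`. -/
def Prefers (L : List α) (o o' : α) : Prop := L.idxOf o < L.idxOf o'

instance (L : List α) (o o' : α) : Decidable (Prefers L o o') :=
  inferInstanceAs (Decidable (L.idxOf o < L.idxOf o'))

/-- `u` is a positive utility function consistent with ranking `L`. -/
def Consistent (L : List α) (u : α → ℝ) : Prop :=
  (∀ o, 0 < u o) ∧ ∀ o o', u o > u o' ↔ Prefers L o o'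

/-- Additive utility of a set of items. -/
def utilOf (u : α → ℝ) (S : Finset α) : ℝ := ∑ o ∈ S, u o

/-- `u` is lexicographic for ranking `L` : each item is worth more than
all strictly less preferred items together. -/
def Lexicographic [Fintype α] (L : List α) (u : α → ℝ) : Prop :=
  ∀ o : α, (∑ o' ∈ univ.filter (fun o' => Prefers L o o'), u o') < u o

/-- The reported profile `prof` is a pure Nash equilibrium under utilities `u`. -/
def IsPNE [Fintype α] (π : List A) (prof : A → List α) (u : A → α → ℝ) : Prop :=
  ∀ i (r : List α), IsRanking r →
    utilOf (u i) (SAalloc π (Function.update prof i r) i) ≤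
      utilOf (u i) (SAalloc π prof i)

/-- The bluff profile: everyone reports the order in which items are picked
under the truthful profile. -/
def bluff (π : List A) (truth : A → List α) : A → List α := fun _ => pickOrder π truth

/-- Swap the two agents. -/
def swapAgents : Fin 2 → Fin 2 := fun a => if a = 0 then 1 else 0

/-- The common report of the crossout profile: reverse and invert the picking sequence,
reverse both preferences, run SA and reverse the resulting picking order. -/
def crossoutList (π : List (Fin 2)) (truth : Fin 2 → List α) : List α :=
  (pickOrder (π.reverse.map swapAgents) (fun i => (truth i).reverse)).reverse

/-- The crossout profile: both agents report `crossoutList`. -/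
def crossout (π : List (Fin 2)) (truth : Fin 2 → List α) : Fin 2 → List α :=
  fun _ => crossoutList π truth

/-- `S` is at least as preferred as `T` w.r.t. pairwise comparisons under strict order `r`. -/
def AtLeastPC (r : α → α → Prop) (S T : Finset α) : Prop :=
  ∃ f : α → α, Set.InjOn f T ∧ (∀ o ∈ T, f o ∈ S) ∧ ∀ o ∈ T, f o = o ∨ r (f o) o

/-- An assignment: every item is held by exactly one agent. -/
def IsAssignment (q : A → Finset α) : Prop := ∀ o : α, ∃! i : A, o ∈ q i

/-- The assignment `p` is Pareto optimal with respect to pairwise comparisons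
under truthful preferences `truth`. -/
def ParetoOptPC (truth : A → List α) (p : A → Finset α) : Prop :=
  ¬ ∃ q : A → Finset α, IsAssignment q ∧
      (∀ i, AtLeastPC (Prefers (truth i)) (q i) (p i)) ∧
      ∃ i, AtLeastPC (Prefers (truth i)) (q i) (p i) ∧
        ¬ AtLeastPC (Prefers (truth i)) (p i) (q i)

/-- `r2` is a best response of agent 2 (index `1`) to the leader's ranking `R`. -/
def BestResp2 [Fintype α] (π : List (Fin 2)) (R : List α) (u2 : α → ℝ) (r2 : List α) : Prop :=
  IsRanking r2 ∧ ∀ r2', IsRanking r2' →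
    utilOf u2 (SAalloc π ![R, r2'] 1) ≤ utilOf u2 (SAalloc π ![R, r2] 1)

/-- The leader's Stackelberg payoff: the best payoff for agent 1 over the
best responses of agent 2 (ties broken in agent 1's favour). -/
noncomputable def stackV [Fintype α] (π : List (Fin 2)) (u1 u2 : α → ℝ) (R : List α) : ℝ :=
  sSup {v : ℝ | ∃ r2, BestResp2 π R u2 r2 ∧ v = utilOf u1 (SAalloc π ![R, r2] 0)}

/-- A token move: one token at position `j` moves to a free later position `j' < mm`. -/
def MoveStep (mm : ℕ) (T T' : Finset ℕ) : Prop :=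
  ∃ j ∈ T, ∃ j', j' < mm ∧ j' ∉ T ∧ j < j' ∧ T' = insert j' (T.erase j)

/-- One replacement: exchange an item of the set for a strictly more preferred item
not in the set. -/
def ReplaceStep (r : α → α → Prop) (T T' : Finset α) : Prop :=
  ∃ x ∈ T, ∃ y, y ∉ T ∧ r y x ∧ T' = insert y (T.erase x)

end SeqAlloc

section Cycle

private def cL0 : List (Fin 4) := [0,1,2,3]
private def cL1 : List (Fin 4) := [0,1,3,2]
private def cL2 : List (Fin 4) := [1,2,3,0]
private def cL3 : List (Fin 4) := [1,0,2,3]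

private def cProf : ℕ → Fin 2 → List (Fin 4) := fun t =>
  [![cL0, cL1], ![cL0, cL2], ![cL3, cL2], ![cL3, cL1]].getD t ![cL0, cL1]

private def cU : Fin 4 → ℝ := ![4,3,2,1]

private lemma cU_apply : ∀ o : Fin 4, cU o = (![4,3,2,1] : Fin 4 → ℝ) o := fun _ => rfl

end Cycle

/-- For two agents, better responses under sequential allocation can cycle. -/
theorem better_responses_can_cycle :
    ∃ (m : ℕ) (π : List (Fin 2)) (truth : Fin 2 → List (Fin m))
      (u : Fin 2 → Fin m → ℝ) (k : ℕ) (seq : ℕ → Fin 2 → List (Fin m)),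
      π.length = m ∧
      (∀ i, IsRanking (truth i)) ∧
      (∀ i, Consistent (truth i) (u i)) ∧
      1 ≤ k ∧ seq k = seq 0 ∧
      (∀ t ≤ k, ∀ i, IsRanking (seq t i)) ∧
      (∀ t < k, ∃ (i : Fin 2) (r : List (Fin m)), IsRanking r ∧
        seq (t + 1) = Function.update (seq t) i r ∧
        utilOf (u i) (SAalloc π (seq t) i) <
          utilOf (u i) (SAalloc π (Function.update (seq t) i r) i)) := by
  refine ⟨4, [0,1,1,0], fun _ => cL0, fun _ => cU, 4, cProf, rfl, ?_, ?_, ?_, ?_, ?_, ?_⟩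
  · intro i; show IsRanking cL0; exact ⟨by decide, by decide⟩
  · intro i
    refine ⟨?_, ?_⟩
    · intro o; fin_cases o <;> norm_num [cU]
    · intro o o'
      fin_cases o <;> fin_cases o' <;>
        simp [cU, Prefers, cL0, List.idxOf, List.findIdx, List.findIdx.go] <;>
          first | norm_num | rfl
  · norm_num
  · rfl
  · intro t ht i
    interval_cases t <;> fin_cases i <;> exact ⟨by decide, by decide⟩
  · intro t ht
    interval_cases t
    · refine ⟨1, cL2, ⟨by decide, by decide⟩, by decide, ?_⟩
      have h1 : SAalloc [0,1,1,0] (cProf 0) 1 = ({1, 3} : Finset (Fin 4)) := by decide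
      have h2 : SAalloc [0,1,1,0] (Function.update (cProf 0) 1 cL2) 1
          = ({1, 2} : Finset (Fin 4)) := by decide
      rw [h1, h2]; simp [utilOf, cU]; try norm_num
    · refine ⟨0, cL3, ⟨by decide, by decide⟩, by decide, ?_⟩
      have h1 : SAalloc [0,1,1,0] (cProf 1) 0 = ({0, 3} : Finset (Fin 4)) := by decide
      have h2 : SAalloc [0,1,1,0] (Function.update (cProf 1) 0 cL3) 0
          = ({1, 0} : Finset (Fin 4)) := by decide
      rw [h1, h2]; simp [utilOf, cU]; try norm_num
    · refine ⟨1, cL1, ⟨by decide, by decide⟩, by decide, ?_⟩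
      have h1 : SAalloc [0,1,1,0] (cProf 2) 1 = ({2, 3} : Finset (Fin 4)) := by decide
      have h2 : SAalloc [0,1,1,0] (Function.update (cProf 2) 1 cL1) 1
          = ({0, 3} : Finset (Fin 4)) := by decide
      rw [h1, h2]; simp [utilOf, cU]; try norm_num
    · refine ⟨0, cL0, ⟨by decide, by decide⟩, by decide, ?_⟩
      have h1 : SAalloc [0,1,1,0] (cProf 3) 0 = ({1, 2} : Finset (Fin 4)) := by decide
      have h2 : SAalloc [0,1,1,0] (Function.update (cProf 3) 0 cL0) 0
          = ({0, 2} : Finset (Fin 4)) := by decide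
      rw [h1, h2]; simp [utilOf, cU]; try norm_num
end

section
/- If every agent's utility function is lexicographic and consistent with his truthful preference, then the bluff profile is a pure Nash equilibrium of the sequential allocation game: no agent i has a report ≻″_i such that u_i(SA(π,(≻″_i, bluff_{-i}))(i)) > u_i(SA(π, bluff)(i)). -/
open Finset

section BluffProof

open List

variable {n m : ℕ}

private lemma mem_contains' {tk : List (Fin m)} {o : Fin m} :
    (tk.contains o = true) ↔ o ∈ tk := by
  exact List.contains_iff_mem

private lemma exists_untaken (tk : List (Fin m)) (h : tk.length < m) :
    ∃ o : Fin m, o ∉ tk := by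
  by_contra hc
  push_neg at hc
  have h1 : (Finset.univ : Finset (Fin m)) ⊆ tk.toFinset :=
    fun o _ => List.mem_toFinset.mpr (hc o)
  have h2 := Finset.card_le_card h1
  have h3 := tk.toFinset_card_le
  simp [Finset.card_univ] at h2
  omega

private lemma head?_eq_cons {l : List (Fin m)} {y : Fin m} (h : l.head? = some y) :
    ∃ t, l = y :: t := by
  cases l with
  | nil => simp at h
  | cons c t => simp at h; exact ⟨t, by rw [h]⟩

private lemma head_filter_exists (l : List (Fin m)) (hl : ∀ o : Fin m, o ∈ l)
    (tk : List (Fin m)) (h : tk.length < m) :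
    ∃ o, (l.filter (fun x => !tk.contains x)).head? = some o ∧ o ∉ tk ∧ o ∈ l := by
  obtain ⟨w, hw⟩ := exists_untaken tk h
  cases hh : (l.filter (fun x => !tk.contains x)).head? with
  | none =>
      rw [List.head?_eq_none_iff, List.filter_eq_nil_iff] at hh
      exact absurd (hh w (hl w)) (by simp [mem_contains', hw])
  | some o =>
      refine ⟨o, rfl, ?_, ?_⟩
      · have hmem : o ∈ l.filter (fun x => !tk.contains x) :=
          List.mem_of_mem_head? (Option.mem_def.mpr hh)
        have := List.mem_filter.mp hmem
        simpa [mem_contains'] using this.2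
      · have hmem : o ∈ l.filter (fun x => !tk.contains x) :=
          List.mem_of_mem_head? (Option.mem_def.mpr hh)
        exact (List.mem_filter.mp hmem).1

private lemma SAevents_cons (prefs : Fin n → List (Fin m)) (a : Fin n) (rest : List (Fin n))
    (tk : List (Fin m)) (o : Fin m)
    (ho : ((prefs a).filter (fun x => !tk.contains x)).head? = some o) :
    SAevents prefs (a :: rest) tk = (a, o) :: SAevents prefs rest (o :: tk) := by
  conv_lhs => rw [SAevents]
  rw [ho]

private lemma SAevents_spec (prefs : Fin n → List (Fin m)) (hc : ∀ a (o : Fin m), o ∈ prefs a) :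
    ∀ (π : List (Fin n)) (tk : List (Fin m)), tk.length + π.length ≤ m →
      (SAevents prefs π tk).map Prod.fst = π ∧
      ((SAevents prefs π tk).map Prod.snd).Nodup ∧
      ∀ o ∈ (SAevents prefs π tk).map Prod.snd, o ∉ tk
  | [], tk, h => by simp [SAevents]
  | a :: rest, tk, h => by
    have hlt : tk.length < m := by simp at h; omega
    obtain ⟨o, ho, hotk, _⟩ := head_filter_exists (prefs a) (hc a) tk hlt
    obtain ⟨h1, h2, h3⟩ := SAevents_spec prefs hc rest (o :: tk) (by simp at h ⊢; omega)
    rw [SAevents_cons prefs a rest tk o ho]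
    refine ⟨by simp [h1], ?_, ?_⟩
    · simp only [List.map_cons, List.nodup_cons]
      exact ⟨fun hmem => (h3 o hmem) (List.mem_cons_self (a := o) (l := tk)), h2⟩
    · intro x hx
      simp only [List.map_cons, List.mem_cons] at hx
      rcases hx with rfl | hx
      · exact hotk
      · exact fun hxtk => (h3 x hx) (List.mem_cons_of_mem o hxtk)

private lemma filter_insert_taken (L : List (Fin m)) (tk : List (Fin m)) (z : Fin m) :
    L.filter (fun o => !((z :: tk).contains o)) =
      (L.filter (fun o => !tk.contains o)).filter (fun o => !(o == z)) := by
  rw [List.filter_filter]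
  exact List.filter_congr (fun x _ => by
    by_cases h1 : x = z <;> by_cases h2 : x ∈ tk <;>
      simp [List.contains_cons, mem_contains', h1, h2])

private lemma filter_cons_taken {L : List (Fin m)} (hL : L.Nodup) {tk : List (Fin m)}
    {B0 : Fin m} {Bt : List (Fin m)}
    (hB : L.filter (fun o => !tk.contains o) = B0 :: Bt) :
    L.filter (fun o => !((B0 :: tk).contains o)) = Bt := by
  rw [filter_insert_taken, hB]
  have hnd : (B0 :: Bt).Nodup := hB ▸ hL.filter _
  rw [List.filter_cons_of_neg (by simp)]
  exact List.filter_eq_self.mpr (fun a ha => by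
    simp only [Bool.not_eq_true', beq_eq_false_iff_ne]
    exact fun he => (List.nodup_cons.mp hnd).1 (he ▸ ha))

private lemma head_filter_min {l : List (Fin m)} {p : Fin m → Bool} {x : Fin m}
    (hx : (l.filter p).head? = some x) : ∀ o ∈ l, p o → l.idxOf x ≤ l.idxOf o := by
  induction l with
  | nil => simp at hx
  | cons b l' ih =>
    intro o ho hp
    by_cases hb : p b
    · rw [List.filter_cons_of_pos hb] at hx
      simp only [List.head?_cons, Option.some.injEq] at hx
      subst hx
      simp [List.idxOf_cons]
    · rw [List.filter_cons_of_neg hb] at hx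
      have hxl : x ∈ l'.filter p := List.mem_of_mem_head? (Option.mem_def.mpr hx)
      have hxp := List.mem_filter.mp hxl
      have hxb : x ≠ b := fun he => hb (he ▸ hxp.2)
      have hob : o ≠ b := fun he => hb (he ▸ hp)
      rcases List.mem_cons.mp ho with rfl | ho'
      · exact absurd rfl hob
      · have := ih hx o ho' hp
        rw [List.idxOf_cons, List.idxOf_cons]
        have h1 : (b == x) = false := by simp [Ne.symm hxb]
        have h2 : (b == o) = false := by simp [Ne.symm hob]
        rw [h1, h2]
        simpa using this

private lemma truth_pairwise (truth : Fin n → List (Fin m)) (hc : ∀ a (o : Fin m), o ∈ truth a) :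
    ∀ (π' : List (Fin n)) (tk : List (Fin m)), tk.length + π'.length ≤ m →
      List.Pairwise (fun p q : Fin n × Fin m => Prefers (truth p.1) p.2 q.2) (SAevents truth π' tk)
  | [], tk, h => by simp [SAevents]
  | a :: rest, tk, h => by
    have hlt : tk.length < m := by simp at h; omega
    obtain ⟨o, ho, hotk, hol⟩ := head_filter_exists (truth a) (hc a) tk hlt
    have hrec := truth_pairwise truth hc rest (o :: tk) (by simp at h ⊢; omega)
    obtain ⟨_, _, h3⟩ := SAevents_spec truth hc rest (o :: tk) (by simp at h ⊢; omega)
    rw [SAevents_cons truth a rest tk o ho]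
    refine List.Pairwise.cons ?_ hrec
    intro q hq
    have hq2 : q.2 ∈ (SAevents truth rest (o :: tk)).map Prod.snd :=
      List.mem_map_of_mem (f := Prod.snd) hq
    have hq3 := h3 q.2 hq2
    have hq4 : q.2 ∈ truth a := hc a q.2
    have hq5 : q.2 ∉ tk := fun hmem => hq3 (List.mem_cons_of_mem o hmem)
    have hne : q.2 ≠ o := fun he => hq3 (he ▸ List.mem_cons_self (a := o) (l := tk))
    have hle : (truth a).idxOf o ≤ (truth a).idxOf q.2 :=
      head_filter_min ho q.2 hq4 (by simp [mem_contains', hq5])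
    refine lt_of_le_of_ne hle (fun he => hne ?_)
    exact ((List.idxOf_inj (y := o) hq4).mp he.symm)

private lemma zip_fst_snd {γ δ : Type*} : ∀ l : List (γ × δ), (l.map Prod.fst).zip (l.map Prod.snd) = l
  | [] => rfl
  | (a, b) :: t => by simp [zip_fst_snd t]

private lemma bluff_events (L : List (Fin m)) (hLnd : L.Nodup) :
    ∀ (π' : List (Fin n)) (tk : List (Fin m)),
      π'.length ≤ (L.filter (fun o => !tk.contains o)).length →
      SAevents (fun _ => L) π' tk = π'.zip (L.filter (fun o => !tk.contains o))
  | [], tk, h => by simp [SAevents]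
  | a :: rest, tk, h => by
    rcases hBe : L.filter (fun o => !tk.contains o) with _ | ⟨B0, Bt⟩
    · rw [hBe] at h; simp at h
    · have hho : (L.filter (fun o => !tk.contains o)).head? = some B0 := by rw [hBe]; rfl
      have hBt := filter_cons_taken hLnd hBe
      have hlen2 : rest.length ≤ (L.filter (fun o => !((B0 :: tk).contains o))).length := by
        rw [hBt]
        rw [hBe] at h
        simpa using h
      rw [SAevents_cons (fun _ => L) a rest tk B0 hho, List.zip_cons_cons]
      rw [bluff_events L hLnd rest (B0 :: tk) hlen2, hBt]
private inductive VR (i : Fin n) (L : List (Fin m)) :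
    List (Fin n) → List (Fin m) → Finset (Fin m) → Prop
  | nil (tk : List (Fin m)) : VR i L [] tk ∅
  | crowd {a : Fin n} {rest : List (Fin n)} {tk : List (Fin m)} {T : Finset (Fin m)} {o : Fin m}
      (ha : a ≠ i) (ho : (L.filter (fun x => !tk.contains x)).head? = some o)
      (h : VR i L rest (o :: tk) T) : VR i L (a :: rest) tk T
  | dev {rest : List (Fin n)} {tk : List (Fin m)} {T : Finset (Fin m)} {o : Fin m}
      (ho : o ∉ tk) (h : VR i L rest (o :: tk) T) : VR i L (i :: rest) tk (insert o T)

private lemma VR_not_taken {i : Fin n} {L : List (Fin m)} {π' : List (Fin n)}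
    {tk : List (Fin m)} {T : Finset (Fin m)} (h : VR i L π' tk T) :
    ∀ x ∈ T, x ∉ tk := by
  induction h with
  | nil => simp
  | crowd ha ho h ih =>
      rename_i a rest tk T o
      exact fun x hx hxtk => ih x hx (List.mem_cons_of_mem o hxtk)
  | dev ho h ih =>
      rename_i rest tk T o
      intro x hx hxtk
      rcases Finset.mem_insert.mp hx with rfl | hx'
      · exact ho hxtk
      · exact ih x hx' (List.mem_cons_of_mem o hxtk)

private lemma VR_congr {i : Fin n} {L : List (Fin m)} {π' : List (Fin n)}
    {tk : List (Fin m)} {T : Finset (Fin m)} (h : VR i L π' tk T) :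
    ∀ tk' : List (Fin m), (∀ x, x ∈ tk ↔ x ∈ tk') → VR i L π' tk' T := by
  induction h with
  | nil => exact fun tk' _ => VR.nil tk'
  | crowd ha ho h ih =>
      rename_i a rest tk T o
      intro tk' hiff
      have hfil : L.filter (fun x => !tk.contains x) = L.filter (fun x => !tk'.contains x) :=
        List.filter_congr (fun x _ => by
          by_cases hx : x ∈ tk
          · rw [mem_contains'.mpr hx, mem_contains'.mpr ((hiff x).mp hx)]
          · have hx' : x ∉ tk' := fun hc => hx ((hiff x).mpr hc)
            rw [Bool.eq_false_iff.mpr (fun hc => hx (mem_contains'.mp hc)),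
              Bool.eq_false_iff.mpr (fun hc => hx' (mem_contains'.mp hc))])
      refine VR.crowd ha (hfil ▸ ho) (ih (o :: tk') ?_)
      intro x
      simp only [List.mem_cons]
      exact or_congr Iff.rfl (hiff x)
  | dev ho h ih =>
      rename_i rest tk T o
      intro tk' hiff
      refine VR.dev (fun hc => ho ((hiff o).mpr hc)) (ih (o :: tk') ?_)
      intro x
      simp only [List.mem_cons]
      exact or_congr Iff.rfl (hiff x)

private lemma VR_swap {i : Fin n} {L : List (Fin m)} :
    ∀ (π' : List (Fin n)) {tk : List (Fin m)} {T : Finset (Fin m)} {x y : Fin m},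
      VR i L π' (x :: tk) T →
      (L.filter (fun o => !tk.contains o)).head? = some y →
      y ≠ x → x ∉ tk → y ∈ T →
      VR i L π' (y :: tk) (insert x (T.erase y))
  | [], tk, T, x, y, h, hy, hyx, hx, hyT => by
      cases h
      simp at hyT
  | a :: rest, tk, T, x, y, h, hy, hyx, hx, hyT => by
      obtain ⟨Bt, hBt⟩ := head?_eq_cons hy
      cases h with
      | crowd ha ho hrec =>
          rename_i o
          exfalso
          have hfe : L.filter (fun o => !((x :: tk).contains o)) = y :: Bt.filter (fun o => !(o == x)) := by
            rw [filter_insert_taken, hBt, List.filter_cons_of_pos (by simpa using hyx)]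
          rw [hfe] at ho
          simp only [List.head?_cons, Option.some.injEq] at ho
          subst ho
          exact VR_not_taken hrec y hyT List.mem_cons_self
      | dev ho hrec =>
          rename_i T0 o
          by_cases hoy : o = y
          · subst hoy
            have hyT0 : o ∉ T0 := fun hz => VR_not_taken hrec o hz List.mem_cons_self
            rw [Finset.erase_insert (hyT0)]
            refine VR.dev (o := x) ?_ (VR_congr hrec (x :: o :: tk) ?_)
            · simp only [List.mem_cons]
              rintro (rfl | hc)
              · exact hyx rfl
              · exact hx hc
            · intro z
              simp only [List.mem_cons]
              tauto
          · have hyT0 : y ∈ T0 := by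
              rcases Finset.mem_insert.mp hyT with rfl | h'
              · exact absurd rfl hoy
              · exact h'
            have hox : o ≠ x := fun he => ho (he ▸ List.mem_cons_self (a := x) (l := tk))
            have hotk : o ∉ tk := fun hc => ho (List.mem_cons_of_mem x hc)
            have h2 : VR i L rest (x :: o :: tk) T0 :=
              VR_congr hrec (x :: o :: tk) (by intro z; simp only [List.mem_cons]; tauto)
            have hy' : (L.filter (fun w => !((o :: tk).contains w))).head? = some y := by
              rw [filter_insert_taken, hBt,
                List.filter_cons_of_pos (by simpa using fun he => hoy he.symm)]
              rfl
            have hIH := VR_swap rest h2 hy' hyx (by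
              simp only [List.mem_cons]
              rintro (rfl | hc)
              · exact hox rfl
              · exact hx hc) hyT0
            have hoT0 : o ∉ T0 := fun hz => VR_not_taken hrec o hz List.mem_cons_self
            rw [Finset.erase_insert_of_ne hoy, Finset.insert_comm]
            refine VR.dev (o := o) ?_ (VR_congr hIH (o :: y :: tk) ?_)
            · simp only [List.mem_cons]
              rintro (rfl | hc)
              · exact hoy rfl
              · exact hotk hc
            · intro z
              simp only [List.mem_cons]
              tauto
private lemma main_lemma {i : Fin n} {L : List (Fin m)} (hLnd : L.Nodup) (hLc : ∀ o : Fin m, o ∈ L)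
    (truth_i : List (Fin m)) (u_i : Fin m → ℝ) (hpos : ∀ o, 0 < u_i o)
    (hlex : Lexicographic truth_i u_i) :
    ∀ (π' : List (Fin n)) (tk : List (Fin m)) (T : Finset (Fin m)),
      VR i L π' tk T →
      (L.filter (fun o => !tk.contains o)).length = π'.length →
      (∀ (j j' : ℕ) (hj : j < π'.length)
        (hjB : j < (L.filter (fun o => !tk.contains o)).length)
        (hj' : j' < (L.filter (fun o => !tk.contains o)).length), j < j' →
        π'[j]'hj = i →
        Prefers truth_i ((L.filter (fun o => !tk.contains o))[j]'hjB)
          ((L.filter (fun o => !tk.contains o))[j']'hj')) →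
      utilOf u_i T ≤ utilOf u_i
        ((((π'.zip (L.filter (fun o => !tk.contains o))).filter (fun p => p.1 == i)).map
          Prod.snd).toFinset)
  | [], tk, T, h, hlen, hstar => by
      cases h
      simp [utilOf]
  | a :: rest, tk, T, h, hlen, hstar => by
      rcases hBe : L.filter (fun o => !tk.contains o) with _ | ⟨B0, Bt⟩
      · rw [hBe] at hlen; simp at hlen
      · rw [hBe] at hlen hstar
        have hBt := filter_cons_taken hLnd hBe
        have hndB : (B0 :: Bt).Nodup := hBe ▸ hLnd.filter _
        have hB0Bt : B0 ∉ Bt := (List.nodup_cons.mp hndB).1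
        have hlen' : (L.filter (fun o => !((B0 :: tk).contains o))).length = rest.length := by
          rw [hBt]; simpa using hlen
        have hstar' : ∀ (j j' : ℕ) (hj : j < rest.length)
            (hjB : j < (L.filter (fun o => !((B0 :: tk).contains o))).length)
            (hj' : j' < (L.filter (fun o => !((B0 :: tk).contains o))).length), j < j' →
            rest[j]'hj = i →
            Prefers truth_i ((L.filter (fun o => !((B0 :: tk).contains o)))[j]'hjB)
              ((L.filter (fun o => !((B0 :: tk).contains o)))[j']'hj') := by
          rw [hBt]
          intro j j' hj hjB hj' hlt hgi
          have := hstar (j+1) (j'+1) (by simpa using Nat.succ_lt_succ hj)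
            (by simpa using Nat.succ_lt_succ hjB) (by simpa using Nat.succ_lt_succ hj')
            (by omega) (by simpa using hgi)
          simpa using this
        -- the bluff continuation set
        set S' : Finset (Fin m) :=
          (((rest.zip Bt).filter (fun p => p.1 == i)).map Prod.snd).toFinset with hS'
        have hS'sub : ∀ z ∈ S', z ∈ Bt := by
          intro z hz
          rw [hS', List.mem_toFinset] at hz
          obtain ⟨p, hp, rfl⟩ := List.mem_map.mp hz
          exact (List.of_mem_zip (List.mem_of_mem_filter hp)).2
        have hB0S' : B0 ∉ S' := fun hc => hB0Bt (hS'sub _ hc)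
        have hS'nonneg : 0 ≤ utilOf u_i S' :=
          Finset.sum_nonneg (fun o _ => le_of_lt (hpos o))
        have hIHgen : ∀ T' : Finset (Fin m), VR i L rest (B0 :: tk) T' →
            utilOf u_i T' ≤ utilOf u_i S' := by
          intro T' hT'
          have := main_lemma hLnd hLc truth_i u_i hpos hlex rest (B0 :: tk) T' hT' hlen' hstar'
          rwa [hBt] at this
        cases h with
        | crowd ha ho hrec =>
            rw [hBe] at ho
            simp only [List.head?_cons, Option.some.injEq] at ho
            subst ho
            have hgoalr : (((a :: rest).zip (B0 :: Bt)).filter (fun p => p.1 == i)).map Prod.snd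
                = ((rest.zip Bt).filter (fun p => p.1 == i)).map Prod.snd := by
              rw [List.zip_cons_cons, List.filter_cons_of_neg (by simpa using ha)]
            rw [hgoalr]
            exact hIHgen T hrec
        | dev ho hrec =>
            rename_i T0 x
            have hgoalr : (((i :: rest).zip (B0 :: Bt)).filter (fun p => p.1 == i)).map Prod.snd
                = B0 :: ((rest.zip Bt).filter (fun p => p.1 == i)).map Prod.snd := by
              rw [List.zip_cons_cons, List.filter_cons_of_pos (by simp), List.map_cons]
            rw [hgoalr, List.toFinset_cons]
            rw [show utilOf u_i (insert B0 S') = u_i B0 + utilOf u_i S' from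
              Finset.sum_insert hB0S']
            have hxT0 : x ∉ T0 := fun hz => VR_not_taken hrec x hz List.mem_cons_self
            by_cases hxB0 : x = B0
            · subst hxB0
              rw [show utilOf u_i (insert x T0) = u_i x + utilOf u_i T0 from
                Finset.sum_insert hxT0]
              exact add_le_add_right (hIHgen T0 hrec) _
            · by_cases hB0T : B0 ∈ T0
              · have hswap := VR_swap rest hrec
                  (by rw [hBe]; rfl) (fun he => hxB0 he.symm) ho hB0T
                have hIH := hIHgen _ hswap
                have e1 : utilOf u_i (insert x T0) = u_i x + utilOf u_i T0 :=
                  Finset.sum_insert hxT0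
                have e2 : utilOf u_i T0 = u_i B0 + utilOf u_i (T0.erase B0) :=
                  (Finset.add_sum_erase _ _ hB0T).symm
                have e3 : utilOf u_i (insert x (T0.erase B0))
                    = u_i x + utilOf u_i (T0.erase B0) :=
                  Finset.sum_insert (fun hc => hxT0 (Finset.mem_of_mem_erase hc))
                rw [e1, e2]
                rw [e3] at hIH
                linarith
              · -- B0 is never picked by the deviator: everything in T is worse than B0
                have hTsub : (insert x T0) ⊆ Finset.univ.filter (fun o' => Prefers truth_i B0 o') := by
                  intro t ht
                  have htk : t ∉ tk := by
                    rcases Finset.mem_insert.mp ht with rfl | ht'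
                    · exact ho
                    · exact fun hc =>
                        VR_not_taken hrec t ht' (List.mem_cons_of_mem x hc)
                  have htB : t ∈ B0 :: Bt := by
                    rw [← hBe]
                    exact List.mem_filter.mpr ⟨hLc t, by simp [mem_contains', htk]⟩
                  have htB0 : t ≠ B0 := by
                    rintro rfl
                    rcases Finset.mem_insert.mp ht with he | ht'
                    · exact hxB0 he.symm
                    · exact hB0T ht'
                  have htBt : t ∈ Bt := by
                    rcases List.mem_cons.mp htB with rfl | h'
                    · exact absurd rfl htB0
                    · exact h'
                  have hidx : (B0 :: Bt).idxOf t < (B0 :: Bt).length :=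
                    List.idxOf_lt_length_iff.mpr htB
                  have hidx0 : 0 < (B0 :: Bt).idxOf t := by
                    rcases Nat.eq_zero_or_pos ((B0 :: Bt).idxOf t) with h0 | h0
                    · exfalso
                      rw [List.idxOf_cons,
                        show (B0 == t) = false from beq_eq_false_iff_ne.mpr (Ne.symm htB0)] at h0
                      simp at h0
                    · exact h0
                  have hpref := hstar 0 ((B0 :: Bt).idxOf t)
                    (by simp) (by simp) hidx hidx0 (by simp)
                  rw [List.getElem_idxOf hidx] at hpref
                  simp only [List.getElem_cons_zero] at hpref
                  exact Finset.mem_filter.mpr ⟨Finset.mem_univ t, hpref⟩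
                have h1 : utilOf u_i (insert x T0) ≤
                    ∑ o' ∈ Finset.univ.filter (fun o' => Prefers truth_i B0 o'), u_i o' :=
                  Finset.sum_le_sum_of_subset_of_nonneg hTsub
                    (fun o _ _ => le_of_lt (hpos o))
                have h2 := hlex B0
                linarith
private lemma dev_VR {i : Fin n} {L : List (Fin m)} (prefs : Fin n → List (Fin m))
    (hother : ∀ a, a ≠ i → prefs a = L) (hcompl : ∀ a (o : Fin m), o ∈ prefs a) :
    ∀ (π' : List (Fin n)) (tk : List (Fin m)), tk.length + π'.length ≤ m →
      VR i L π' tk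
        ((((SAevents prefs π' tk).filter (fun p => p.1 == i)).map Prod.snd).toFinset)
  | [], tk, h => by
      have : SAevents prefs [] tk = [] := rfl
      rw [this]
      exact VR.nil tk
  | a :: rest, tk, h => by
      have hlt : tk.length < m := by simp at h; omega
      obtain ⟨o, ho, hotk, _⟩ := head_filter_exists (prefs a) (hcompl a) tk hlt
      have ih := dev_VR prefs hother hcompl rest (o :: tk) (by simp at h ⊢; omega)
      rw [SAevents_cons prefs a rest tk o ho]
      by_cases ha : a = i
      · subst ha
        rw [List.filter_cons_of_pos (by simp), List.map_cons, List.toFinset_cons]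
        exact VR.dev hotk ih
      · rw [List.filter_cons_of_neg (by simpa using ha)]
        refine VR.crowd ha ?_ ih
        rw [← hother a ha]
        exact ho

end BluffProof

/-- The bluff profile is a pure Nash equilibrium when all utilities are
lexicographic and consistent with the truthful preferences. -/
theorem bluff_PNE_lexicographic {n m : ℕ} (π : List (Fin n)) (truth : Fin n → List (Fin m))
    (u : Fin n → Fin m → ℝ)
    (hπ : π.length = m) (htruth : ∀ i, IsRanking (truth i))
    (hcons : ∀ i, Consistent (truth i) (u i))
    (hlex : ∀ i, Lexicographic (truth i) (u i)) :
    IsPNE π (bluff π truth) u := by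
  intro i r hr
  set L := pickOrder π truth with hLdef
  have htc : ∀ a (o : Fin m), o ∈ truth a := fun a => (htruth a).2
  obtain ⟨hfst, hnd, -⟩ := SAevents_spec truth htc π [] (by simp [hπ])
  have hevlen : (SAevents truth π []).length = m := by
    have := congrArg List.length hfst
    simpa [hπ] using this
  have hLlen : L.length = m := by
    simp [hLdef, pickOrder, hevlen]
  have hLnd : L.Nodup := hnd
  have hLc : ∀ o : Fin m, o ∈ L := by
    intro o
    have hcard : L.toFinset.card = Fintype.card (Fin m) := by
      rw [List.toFinset_card_of_nodup hLnd, hLlen, Fintype.card_fin]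
    have huniv : L.toFinset = Finset.univ := Finset.eq_univ_of_card _ hcard
    rw [← List.mem_toFinset, huniv]
    exact Finset.mem_univ o
  have hfilnil : L.filter (fun o => !(([] : List (Fin m)).contains o)) = L := by
    simp
  -- the truthful run's events are `π.zip L`
  have hev : SAevents truth π [] = π.zip L := by
    conv_lhs => rw [← zip_fst_snd (SAevents truth π [])]
    rw [hfst]
    rfl
  have hpw := truth_pairwise truth htc π [] (by simp [hπ])
  rw [hev] at hpw
  have hstar0 : ∀ (j j' : ℕ) (hj : j < π.length) (hjB : j < L.length) (hj' : j' < L.length),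
      j < j' → π[j]'hj = i → Prefers (truth i) (L[j]'hjB) (L[j']'hj') := by
    intro j j' hj hjB hj' hlt hgi
    have hzl : (π.zip L).length = m := by
      rw [List.length_zip, hπ, hLlen]; simp
    have hpq := (List.pairwise_iff_get.mp hpw) ⟨j, by omega⟩ ⟨j', by omega⟩ (by simpa using hlt)
    simp only [List.get_eq_getElem, List.getElem_zip] at hpq
    simpa [hgi] using hpq
  -- deviation run is a valid run
  have hdev := dev_VR (i := i) (L := L) (Function.update (bluff π truth) i r)
    (fun a ha => by rw [Function.update_of_ne ha]; rfl)
    (fun a o => by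
      by_cases ha : a = i
      · subst ha; rw [Function.update_self]; exact hr.2 o
      · rw [Function.update_of_ne ha]; exact hLc o)
    π [] (by simp [hπ])
  have hmain := main_lemma hLnd hLc (truth i) (u i) (hcons i).1 (hlex i) π [] _ hdev
    (by rw [hfilnil, hLlen, hπ])
    (by rw [hfilnil]; exact hstar0)
  rw [hfilnil] at hmain
  -- identify both sides with SAalloc
  have hbluffev : SAevents (bluff π truth) π [] = π.zip L := by
    have hbl : bluff π truth = fun _ => L := rfl
    rw [hbl, bluff_events L hLnd π [] (by rw [hfilnil, hLlen, hπ]), hfilnil]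
  unfold SAalloc
  rw [hbluffev]
  exact hmain
end

section
/- For two agents, if both agents have upward lexicographic utilities consistent with their truthful preferences, then the crossout profile is a pure Nash equilibrium of the sequential allocation game. -/
open Finset

section AuxProofs

open List

variable {A : Type*} [DecidableEq A] {α : Type*} [DecidableEq α]

private lemma head?_filter' (p : α → Bool) (l : List α) : (l.filter p).head? = l.find? p := by
  induction l with
  | nil => rfl
  | cons a t ih => by_cases h : p a <;> simp [List.find?_cons, h, ih]

private lemma find?_indexOf_le {l : List α} (hl : l.Nodup) {p : α → Bool} {a b : α}
    (h : l.find? p = some a) (hb : b ∈ l) (hpb : p b = true) : l.idxOf a ≤ l.idxOf b := by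
  rw [List.find?_eq_some_iff_getElem] at h
  obtain ⟨hpa, i, hi, hgi, hmin⟩ := h
  have hbl : l.idxOf b < l.length := List.idxOf_lt_length_iff.2 hb
  have hgb : l[l.idxOf b] = b := List.getElem_idxOf hbl
  have hal : a ∈ l := hgi ▸ List.getElem_mem hi
  have hail : l.idxOf a < l.length := List.idxOf_lt_length_iff.2 hal
  have hia : l.idxOf a = i := by
    have h2 : l[l.idxOf a] = l[i] := by rw [hgi]; exact List.getElem_idxOf hail
    exact (List.Nodup.getElem_inj_iff hl).1 h2
  by_contra hlt
  push_neg at hlt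
  rw [hia] at hlt
  have h3 := hmin (l.idxOf b) hlt
  rw [hgb] at h3
  simp [hpb] at h3

private lemma exists_not_mem_of_length_lt [Fintype α] {taken : List α}
    (h : taken.length < Fintype.card α) : ∃ o : α, o ∉ taken := by
  by_contra hc
  push_neg at hc
  have h1 : (Finset.univ : Finset α) ⊆ taken.toFinset := fun o _ => List.mem_toFinset.2 (hc o)
  have h2 := Finset.card_le_card h1
  have h3 := taken.toFinset_card_le
  simp only [Finset.card_univ] at h2
  omega

private lemma pick_succeeds [Fintype α] {prefs : A → List α} (hp : ∀ b, IsRanking (prefs b))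
    (a : A) {taken : List α} (h : taken.length < Fintype.card α) :
    ∃ o, ((prefs a).filter (fun x => !(taken.contains x))).head? = some o ∧ o ∉ taken := by
  obtain ⟨o', ho'⟩ := exists_not_mem_of_length_lt h
  rw [head?_filter']
  cases hf : (prefs a).find? (fun x => !(taken.contains x)) with
  | none =>
    rw [List.find?_eq_none] at hf
    have := hf o' ((hp a).2 o')
    simp [ho'] at this
  | some o =>
    refine ⟨o, rfl, ?_⟩
    have := List.find?_some hf
    simpa using this

private lemma SAevents_cons_eq {prefs : A → List α} {a : A} {rest : List A} {taken : List α}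
    {o : α} (ho : ((prefs a).filter (fun x => !(taken.contains x))).head? = some o) :
    SAevents prefs (a :: rest) taken = (a, o) :: SAevents prefs rest (o :: taken) := by
  rw [SAevents, ho]

private lemma SAevents_spec_s5 [Fintype α] {prefs : A → List α} (hp : ∀ b, IsRanking (prefs b)) :
    ∀ (π : List A) (taken : List α), taken.Nodup → taken.length + π.length ≤ Fintype.card α →
      (SAevents prefs π taken).map Prod.fst = π ∧
      ((SAevents prefs π taken).map Prod.snd ++ taken).Nodup
  | [], taken, hnd, _ => by simp [SAevents, hnd]
  | a :: rest, taken, hnd, hlen => by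
    obtain ⟨o, ho, hno⟩ := pick_succeeds hp a (taken := taken) (by simp at hlen; omega)
    rw [SAevents_cons_eq ho]
    obtain ⟨h1, h2⟩ := SAevents_spec_s5 hp rest (o :: taken) (by simp [hnd, hno])
      (by simp at hlen ⊢; omega)
    refine ⟨by simp [h1], ?_⟩
    have h3 := (List.perm_middle (a := o)
      (l₁ := (SAevents prefs rest (o :: taken)).map Prod.snd) (l₂ := taken)).nodup h2
    simpa using h3

private lemma SAevents_pick_min [Fintype α] {prefs : A → List α} (hp : ∀ b, IsRanking (prefs b)) :
    ∀ (π : List A) (taken : List α), taken.Nodup → taken.length + π.length ≤ Fintype.card α →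
      ∀ (t t' : ℕ) (a : A) (x : α) (b : A) (y : α), t ≤ t' →
        (SAevents prefs π taken)[t]? = some (a, x) →
        (SAevents prefs π taken)[t']? = some (b, y) →
        (prefs a).idxOf x ≤ (prefs a).idxOf y
  | [], _, _, _, t, t', a, x, b, y, htt, h1, h2 => by simp [SAevents] at h1
  | a0 :: rest, taken, hnd, hlen, t, t', a, x, b, y, htt, h1, h2 => by
    obtain ⟨o, ho, hno⟩ := pick_succeeds hp a0 (taken := taken) (by simp at hlen; omega)
    rw [SAevents_cons_eq ho] at h1 h2
    match t, t', htt with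
    | 0, 0, _ =>
      simp only [List.getElem?_cons_zero, Option.some.injEq, Prod.mk.injEq] at h1 h2
      obtain ⟨rfl, rfl⟩ := h1
      obtain ⟨-, rfl⟩ := h2
      exact le_refl _
    | 0, (s+1), _ =>
      simp only [List.getElem?_cons_zero, Option.some.injEq, Prod.mk.injEq] at h1
      obtain ⟨ha, hx⟩ := h1
      rw [← ha, ← hx]
      simp only [List.getElem?_cons_succ] at h2
      have hmem : (b, y) ∈ SAevents prefs rest (o :: taken) := List.mem_of_getElem? h2
      have hysnd : y ∈ (SAevents prefs rest (o :: taken)).map Prod.snd :=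
        List.mem_map.2 ⟨(b, y), hmem, rfl⟩
      have hspec := (SAevents_spec_s5 hp rest (o :: taken) (by simp [hnd, hno])
        (by simp at hlen ⊢; omega)).2
      have hyn : y ∉ o :: taken := List.disjoint_of_nodup_append hspec hysnd
      have hfind : (prefs a0).find? (fun x => !(taken.contains x)) = some o := by
        rw [← head?_filter']; exact ho
      refine find?_indexOf_le (hp a0).1 hfind ((hp a0).2 y) ?_
      simp only [Bool.not_eq_true']
      simpa using fun hmem' => hyn (List.mem_cons_of_mem _ hmem')
    | (s+1), (s'+1), _ =>
      simp only [List.getElem?_cons_succ] at h1 h2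
      exact SAevents_pick_min hp rest (o :: taken) (by simp [hnd, hno])
        (by simp at hlen ⊢; omega) s s' a x b y (by omega) h1 h2

private lemma indexOf_reverse_eq {L : List α} (h : L.Nodup) {a : α} (ha : a ∈ L) :
    L.reverse.idxOf a = L.length - 1 - L.idxOf a := by
  have hka : L.idxOf a < L.length := List.idxOf_lt_length_iff.2 ha
  have har : a ∈ L.reverse := by simpa using ha
  have hkr : L.reverse.idxOf a < L.reverse.length := List.idxOf_lt_length_iff.2 har
  have h1 : L.reverse[L.reverse.idxOf a] = a := List.getElem_idxOf hkr
  have hlt : L.length - 1 - L.idxOf a < L.reverse.length := by simp; omega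
  have h2 : L.reverse[L.length - 1 - L.idxOf a] = a := by
    rw [List.getElem_reverse]
    have h3 : L.length - 1 - (L.length - 1 - L.idxOf a) = L.idxOf a := by omega
    simp only [h3]
    exact List.getElem_idxOf hka
  have hnr : L.reverse.Nodup := by simpa using h
  exact (List.Nodup.getElem_inj_iff hnr).1 (h1.trans h2.symm)

private lemma indexOf_le_of_reverse_le {L : List α} (h : L.Nodup) {a b : α} (ha : a ∈ L)
    (hb : b ∈ L) (hle : L.reverse.idxOf a ≤ L.reverse.idxOf b) :
    L.idxOf b ≤ L.idxOf a := by
  rw [indexOf_reverse_eq h ha, indexOf_reverse_eq h hb] at hle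
  have h1 := List.idxOf_lt_length_iff.2 ha
  have h2 := List.idxOf_lt_length_iff.2 hb
  omega

private lemma filter_take_reverse {L : List α} (hL : L.Nodup) (n : ℕ) :
    L.filter (fun o => !(((L.take n).reverse).contains o)) = L.drop n := by
  set p : α → Bool := fun o => !(((L.take n).reverse).contains o) with hpdef
  conv_lhs => rw [← List.take_append_drop n L]
  rw [List.filter_append]
  have h1 : (L.take n).filter p = [] := by
    rw [List.filter_eq_nil_iff]
    intro a ha
    simp [hpdef, ha]
  have h2 : (L.drop n).filter p = L.drop n := by
    rw [List.filter_eq_self]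
    intro a ha
    have hnd : (L.take n ++ L.drop n).Nodup := by rw [List.take_append_drop]; exact hL
    have hnot : a ∉ L.take n := fun hmem => List.disjoint_of_nodup_append hnd hmem ha
    simp [hpdef, hnot]
  rw [h1, h2, List.nil_append]

private lemma SAevents_const_cons {L : List α} (hL : L.Nodup) {prefsC : A → List α}
    (hpc : ∀ b, prefsC b = L) (a : A) (rest : List A) {n : ℕ} (hn : n < L.length) :
    SAevents prefsC (a :: rest) ((L.take n).reverse) =
      (a, L[n]) :: SAevents prefsC rest ((L.take (n+1)).reverse) := by
  have hho : ((prefsC a).filter (fun o => !(((L.take n).reverse).contains o))).head?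
      = some L[n] := by
    rw [hpc a, filter_take_reverse hL n, List.drop_eq_getElem_cons hn]; rfl
  rw [SAevents_cons_eq hho]
  have htake : (L.take (n+1)).reverse = L[n] :: (L.take n).reverse := by
    rw [List.take_succ, List.getElem?_eq_getElem hn]
    simp
  rw [htake]

private lemma exists_take_not_mem {L : List α} (hL : L.Nodup) {n : ℕ} (hn : n < L.length)
    {taken : List α} (ht : taken.length = n) : ∃ o ∈ L.take (n+1), o ∉ taken := by
  by_contra hc
  push_neg at hc
  have hsub : (L.take (n+1)).toFinset ⊆ taken.toFinset := by
    intro o ho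
    exact List.mem_toFinset.2 (hc o (List.mem_toFinset.1 ho))
  have hcard := Finset.card_le_card hsub
  have hndt : (L.take (n+1)).Nodup := List.Nodup.sublist (List.take_sublist _ _) hL
  have h1 : (L.take (n+1)).toFinset.card = n+1 := by
    rw [List.toFinset_card_of_nodup hndt, List.length_take]
    omega
  have h2 := taken.toFinset_card_le
  omega

private lemma grand [Fintype α] {prefs prefsC : A → List α} (hAg : A) {Lstar : List α}
    (hLnd : Lstar.Nodup) (hLlen : Lstar.length = Fintype.card α)
    (hpd : ∀ b, IsRanking (prefs b)) (hpc : ∀ b, prefsC b = Lstar)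
    (hph : prefs hAg = Lstar) (w : α → ℝ) :
    ∀ (π' : List A) (n : ℕ) (taken : List α), taken.Nodup → taken.length = n →
      n + π'.length ≤ Fintype.card α →
      (∀ (t : ℕ) (h2 : n + t < Lstar.length), π'[t]? = some hAg →
        ∀ o : α, Lstar.idxOf o ≤ n + t → w (Lstar[n + t]) ≤ w o) →
      (((SAevents prefsC π' ((Lstar.take n).reverse)).filter (fun p => p.1 == hAg)).map
        (fun p => w p.2)).sum ≤
      (((SAevents prefs π' taken).filter (fun p => p.1 == hAg)).map (fun p => w p.2)).sum
  | [], n, taken, _, _, _, _ => by simp [SAevents]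
  | a :: rest, n, taken, hnd, htl, hlen, H => by
    have hcard : taken.length < Fintype.card α := by simp at hlen; omega
    have hnL : n < Lstar.length := by rw [hLlen]; simp at hlen; omega
    obtain ⟨o, ho, hno⟩ := pick_succeeds hpd a (taken := taken) hcard
    rw [SAevents_cons_eq ho, SAevents_const_cons hLnd hpc a rest hnL]
    have hrec := grand hAg hLnd hLlen hpd hpc hph w rest (n+1) (o :: taken)
      (by simp [hnd, hno]) (by simp [htl]) (by simp at hlen ⊢; omega)
      (fun t h2 hπt o' hio' => by
        have he : n + 1 + t = n + (t + 1) := by omega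
        have hh := H (t+1) (by omega) (by simpa using hπt) o' (by omega)
        simpa [he] using hh)
    by_cases hah : a = hAg
    · subst hah
      have hio : Lstar.idxOf o ≤ n := by
        obtain ⟨o', ho'mem, ho'nt⟩ := exists_take_not_mem hLnd hnL htl
        have hfind : Lstar.find? (fun x => !(taken.contains x)) = some o := by
          rw [← head?_filter', ← hph]; exact ho
        have h1 : Lstar.idxOf o ≤ Lstar.idxOf o' :=
          find?_indexOf_le hLnd hfind (List.mem_of_mem_take ho'mem) (by simp [ho'nt])
        have h2 : Lstar.idxOf o' ≤ n := by
          have e : Lstar.idxOf o' = (Lstar.take (n+1)).idxOf o' := by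
            conv_lhs => rw [← List.take_append_drop (n+1) Lstar]
            exact List.idxOf_append_of_mem ho'mem
          have h3 : (Lstar.take (n+1)).idxOf o' < (Lstar.take (n+1)).length :=
            List.idxOf_lt_length_iff.2 ho'mem
          rw [List.length_take] at h3
          omega
        omega
      have hwo : w (Lstar[n]'hnL) ≤ w o := by
        have hh := H 0 (by omega) (by simp) o (by omega)
        simpa using hh
      simp only [List.filter_cons, beq_self_eq_true, if_true, List.map_cons, List.sum_cons]
      exact add_le_add hwo hrec
    · have hbeq : (a == hAg) = false := by simp [hah]
      simp only [List.filter_cons, hbeq, Bool.false_eq_true, if_false]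
      exact hrec

private lemma crossoutList_spec {m : ℕ} {π : List (Fin 2)} {truth : Fin 2 → List (Fin m)}
    (hπ : π.length = m) (htruth : ∀ b, IsRanking (truth b)) :
    (crossoutList π truth).Nodup ∧ (crossoutList π truth).length = m ∧
      ∀ o : Fin m, o ∈ crossoutList π truth := by
  have hrtr : ∀ b : Fin 2, IsRanking ((truth b).reverse) :=
    fun b => ⟨by simpa using (htruth b).1, fun o => by simpa using (htruth b).2 o⟩
  have hlenπ'' : (π.reverse.map swapAgents).length = m := by simp [hπ]
  obtain ⟨hfst, hnd⟩ := SAevents_spec_s5 (prefs := fun i => (truth i).reverse) hrtr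
    (π.reverse.map swapAgents) [] (by simp) (by simp [Fintype.card_fin, hπ])
  have hE : (SAevents (fun i => (truth i).reverse) (π.reverse.map swapAgents) []).length = m := by
    have hc := congrArg List.length hfst
    simpa [hπ] using hc
  have hX : crossoutList π truth =
      ((SAevents (fun i => (truth i).reverse) (π.reverse.map swapAgents) []).map
        Prod.snd).reverse := rfl
  have hndX : (crossoutList π truth).Nodup := by
    rw [hX]; simpa using hnd
  have hlenX : (crossoutList π truth).length = m := by
    rw [hX, List.length_reverse, List.length_map]; exact hE
  refine ⟨hndX, hlenX, ?_⟩
  have huniv : (crossoutList π truth).toFinset = Finset.univ := by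
    apply Finset.eq_univ_of_card
    rw [List.toFinset_card_of_nodup hndX, hlenX, Fintype.card_fin]
  intro o
  rw [← List.mem_toFinset, huniv]
  exact Finset.mem_univ o

private lemma swap_swap : ∀ k : Fin 2, swapAgents (swapAgents k) = k := by decide

private lemma crossout_Q {m : ℕ} {π : List (Fin 2)} {truth : Fin 2 → List (Fin m)}
    (hπ : π.length = m) (htruth : ∀ b, IsRanking (truth b)) (i : Fin 2)
    {j j' : ℕ} {x y : Fin m} (hj' : j' ≤ j)
    (hja : π[j]? = some (swapAgents i))
    (hx : (crossoutList π truth)[j']? = some x) (hy : (crossoutList π truth)[j]? = some y) :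
    (truth i).idxOf x ≤ (truth i).idxOf y := by
  obtain ⟨hndX, hlenX, hmemX⟩ := crossoutList_spec hπ htruth
  have hrtr : ∀ b : Fin 2, IsRanking ((truth b).reverse) :=
    fun b => ⟨by simpa using (htruth b).1, fun o => by simpa using (htruth b).2 o⟩
  obtain ⟨hfst, hnd⟩ := SAevents_spec_s5 (prefs := fun c => (truth c).reverse) hrtr
    (π.reverse.map swapAgents) [] (by simp) (by simp [Fintype.card_fin, hπ])
  obtain ⟨R, hRdef⟩ : ∃ R, SAevents (fun c : Fin 2 => (truth c).reverse)
      (π.reverse.map swapAgents) [] = R := ⟨_, rfl⟩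
  rw [hRdef] at hfst hnd
  have hE : R.length = m := by
    have hc := congrArg List.length hfst; simpa [hπ] using hc
  have hDlen : (R.map Prod.snd).length = m := by rw [List.length_map]; exact hE
  have hX : crossoutList π truth = (R.map Prod.snd).reverse := by rw [← hRdef]; rfl
  have hjm : j < m := by
    have hh := (List.getElem?_eq_some_iff.1 hy).1
    rwa [hlenX] at hh
  have hj'm : j' < m := by omega
  rw [hX] at hy hx
  have hyq : (R.map Prod.snd)[m - 1 - j]? = some y := by
    rw [List.getElem?_reverse (by omega)] at hy
    rw [show (R.map Prod.snd).length - 1 - j = m - 1 - j from by omega] at hy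
    exact hy
  have hxq : (R.map Prod.snd)[m - 1 - j']? = some x := by
    rw [List.getElem?_reverse (by omega)] at hx
    rw [show (R.map Prod.snd).length - 1 - j' = m - 1 - j' from by omega] at hx
    exact hx
  have htR : m - 1 - j < R.length := by omega
  have ht'R : m - 1 - j' < R.length := by omega
  have hRt : R[m - 1 - j]? = some (R[m - 1 - j]'htR) := List.getElem?_eq_getElem htR
  have hRt' : R[m - 1 - j']? = some (R[m - 1 - j']'ht'R) := List.getElem?_eq_getElem ht'R
  have hagent : (R[m - 1 - j]'htR).1 = i := by
    have h1 : (R.map Prod.fst)[m - 1 - j]? = some ((R[m - 1 - j]'htR).1) := by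
      rw [List.getElem?_map, hRt]; rfl
    rw [hfst, List.getElem?_map, List.getElem?_reverse (by rw [hπ]; omega)] at h1
    rw [show π.length - 1 - (m - 1 - j) = j from by omega, hja] at h1
    have h2 := Option.some.inj h1
    rw [← h2]; exact swap_swap i
  have hsndy : (R[m - 1 - j]'htR).2 = y := by
    have h1 : (R.map Prod.snd)[m - 1 - j]? = some ((R[m - 1 - j]'htR).2) := by
      rw [List.getElem?_map, hRt]; rfl
    rw [hyq] at h1
    exact (Option.some.inj h1).symm
  have hsndx : (R[m - 1 - j']'ht'R).2 = x := by
    have h1 : (R.map Prod.snd)[m - 1 - j']? = some ((R[m - 1 - j']'ht'R).2) := by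
      rw [List.getElem?_map, hRt']; rfl
    rw [hxq] at h1
    exact (Option.some.inj h1).symm
  have hmin := SAevents_pick_min hrtr (π.reverse.map swapAgents) [] (by simp)
    (by simp [Fintype.card_fin, hπ]) (m - 1 - j) (m - 1 - j')
    ((R[m - 1 - j]'htR).1) ((R[m - 1 - j]'htR).2)
    ((R[m - 1 - j']'ht'R).1) ((R[m - 1 - j']'ht'R).2)
    (by omega)
    (by rw [hRdef, hRt])
    (by rw [hRdef, hRt'])
  simp only [hagent, hsndy, hsndx] at hmin
  exact indexOf_le_of_reverse_le (htruth i).1 ((htruth i).2 y) ((htruth i).2 x) hmin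

private lemma util_split {m : ℕ} (π : List (Fin 2)) (prefs : Fin 2 → List (Fin m))
    (hp : ∀ b, IsRanking (prefs b)) (hπ : π.length = m) (i : Fin 2) (ui : Fin m → ℝ) :
    utilOf ui (SAalloc π prefs i) =
      (∑ o : Fin m, ui o) -
      (((SAevents prefs π []).filter (fun p => p.1 == swapAgents i)).map
        (fun p => ui p.2)).sum := by
  obtain ⟨hfst, hnd⟩ := SAevents_spec_s5 hp π [] (by simp) (by simp [Fintype.card_fin, hπ])
  unfold utilOf SAalloc
  obtain ⟨E, hEdef⟩ : ∃ E, SAevents prefs π [] = E := ⟨_, rfl⟩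
  rw [hEdef] at hfst hnd ⊢
  have hndE : (E.map Prod.snd).Nodup := by simpa using hnd
  have hElen : E.length = m := by
    have hc := congrArg List.length hfst; simpa [hπ] using hc
  have huniv : (E.map Prod.snd).toFinset = (Finset.univ : Finset (Fin m)) := by
    apply Finset.eq_univ_of_card
    rw [List.toFinset_card_of_nodup hndE, List.length_map, hElen, Fintype.card_fin]
  have htot : ((E.map Prod.snd).map ui).sum = ∑ o : Fin m, ui o := by
    rw [← List.sum_toFinset ui hndE, huniv]
  have hpredeq : (fun p : Fin 2 × Fin m => p.1 == swapAgents i)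
      = (fun p : Fin 2 × Fin m => !(p.1 == i)) := by
    funext p
    have hall : ∀ a b : Fin 2, (a == swapAgents b) = !(a == b) := by decide
    exact hall p.1 i
  have hsplit : ((E.filter (fun p => p.1 == i)).map (fun p => ui p.2)).sum
      + ((E.filter (fun p => !(p.1 == i))).map (fun p => ui p.2)).sum
      = ∑ o : Fin m, ui o := by
    rw [← List.sum_append, ← List.map_append]
    have hperm := (List.filter_append_perm (fun p : Fin 2 × Fin m => p.1 == i) E).map
      (fun p => ui p.2)
    rw [hperm.sum_eq, ← htot, List.map_map]
    rfl
  have halloc : ∑ o ∈ ((E.filter (fun p => p.1 == i)).map Prod.snd).toFinset, ui o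
      = ((E.filter (fun p => p.1 == i)).map (fun p => ui p.2)).sum := by
    have hsubnd : ((E.filter (fun p => p.1 == i)).map Prod.snd).Nodup :=
      List.Nodup.sublist (List.Sublist.map Prod.snd (List.filter_sublist (l := E))) hndE
    rw [List.sum_toFinset ui hsubnd, List.map_map]
    rfl
  rw [halloc, hpredeq, ← hsplit]
  ring

end AuxProofs

/-- For two agents with upward lexicographic utilities
(`u_i(o_j) = 1 - 1/2^(m+1-j)` for the `j`-th ranked item), the crossout profile
is a pure Nash equilibrium. -/
theorem crossout_PNE_upward_lexicographic {m : ℕ} (π : List (Fin 2))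
    (truth : Fin 2 → List (Fin m)) (u : Fin 2 → Fin m → ℝ)
    (hπ : π.length = m) (htruth : ∀ i, IsRanking (truth i))
    (huplex : ∀ i o, u i o = 1 - (1 / 2 : ℝ) ^ (m - (truth i).idxOf o)) :
    IsPNE π (crossout π truth) u := by
  intro i r hr
  obtain ⟨hndX, hlenX, hmemX⟩ := crossoutList_spec hπ htruth
  have hrankX : IsRanking (crossoutList π truth) := ⟨hndX, hmemX⟩
  have hswapne : swapAgents i ≠ i := by
    have hall : ∀ k : Fin 2, swapAgents k ≠ k := by decide
    exact hall i
  have hpd : ∀ b, IsRanking (Function.update (crossout π truth) i r b) := by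
    intro b
    by_cases hbi : b = i
    · subst hbi; simpa [Function.update_self] using hr
    · rw [Function.update_of_ne hbi]; exact hrankX
  have hpc : ∀ b : Fin 2, crossout π truth b = crossoutList π truth := fun b => rfl
  have hpcr : ∀ b : Fin 2, IsRanking (crossout π truth b) := fun b => hrankX
  have hph : Function.update (crossout π truth) i r (swapAgents i) = crossoutList π truth := by
    rw [Function.update_of_ne hswapne]
    rfl
  rw [util_split π (Function.update (crossout π truth) i r) hpd hπ i (u i),
    util_split π (crossout π truth) hpcr hπ i (u i)]
  apply sub_le_sub_left
  have hH : ∀ (t : ℕ) (h2 : 0 + t < (crossoutList π truth).length), π[t]? = some (swapAgents i) →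
      ∀ o : Fin m, (crossoutList π truth).idxOf o ≤ 0 + t →
      u i ((crossoutList π truth)[0 + t]) ≤ u i o := by
    intro t h2 hπt o hio
    have htm : t < m := by rw [hlenX] at h2; omega
    have homem : o ∈ crossoutList π truth := by
      by_contra hno
      rw [List.idxOf_eq_length hno, hlenX] at hio
      omega
    have hilt : (crossoutList π truth).idxOf o < (crossoutList π truth).length :=
      List.idxOf_lt_length_iff.2 homem
    have hxq : (crossoutList π truth)[(crossoutList π truth).idxOf o]? = some o := by
      rw [List.getElem?_eq_getElem hilt, List.getElem_idxOf]
    have hyq : (crossoutList π truth)[t]? =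
        some ((crossoutList π truth)[t]'(by rw [hlenX]; omega)) :=
      List.getElem?_eq_getElem _
    have hQ := crossout_Q hπ htruth i (by omega) hπt hxq hyq
    rw [huplex i o, huplex i ((crossoutList π truth)[0 + t])]
    have hpow : (1/2 : ℝ) ^ (m - (truth i).idxOf o)
        ≤ (1/2 : ℝ) ^ (m - (truth i).idxOf ((crossoutList π truth)[t]'(by rw [hlenX]; omega))) :=
      pow_le_pow_of_le_one (by norm_num) (by norm_num) (by omega)
    have hidx : (crossoutList π truth)[0 + t]'(h2) =
        (crossoutList π truth)[t]'(by rw [hlenX]; omega) := by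
      simp only [Nat.zero_add]
    rw [hidx]
    linarith
  have hgr := grand (A := Fin 2) (α := Fin m) (swapAgents i) hndX
    (by rw [hlenX, Fintype.card_fin]) hpd hpc hph (u i) π 0 [] (by simp) rfl
    (by simp [Fintype.card_fin, hπ]) hH
  simpa using hgr
end

section
/- Even for two agents, the outcome of the crossout profile may differ from the truthful outcome: there exists an instance with two agents, four items, and picking sequence 1212 (agent 1 picks at steps 1 and 3, agent 2 at steps 2 and 4) such that SA applied to the crossout profile gives agent 1 an allocation different from SA applied to the truthful profile, i.e., SA(π, crossout)(1) ≠ SA(π, ≻)(1). -/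
open Finset

/-- There is a two-agent, four-item instance with picking sequence 1212
in which the crossout profile gives agent 1 a different allocation than truthful play. -/
theorem crossout_outcome_differs_from_truthful :
    ∃ truth : Fin 2 → List (Fin 4), (∀ i, IsRanking (truth i)) ∧
      SAalloc [0, 1, 0, 1] (crossout [0, 1, 0, 1] truth) 0 ≠
        SAalloc [0, 1, 0, 1] truth 0 := by
  exact ⟨![[0,1,2,3],[1,2,3,0]], by intro i; fin_cases i <;> exact ⟨by decide, by decide⟩, by decide⟩
end

section
/- For every instance (any number of agents, any picking sequence π, any truthful profile ≻), the assignment produced by SA on the bluff profile is Pareto optimal with respect to pairwise comparisons: there is no assignment q of the items to the agents such that for every agent i, q(i) is at least as preferred as SA(π, bluff)(i) with respect to pairwise comparisons under ≻_i, and for some agent i, q(i) is at least as preferred as SA(π, bluff)(i) but SA(π, bluff)(i) is not at least as preferred as q(i). -/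
open Finset

section Helpers

variable {n m : ℕ}

lemma SAevents_cons_some {A : Type*} [DecidableEq A] {α : Type*} [DecidableEq α]
    {prefs : A → List α} {a : A} {rest : List A} {taken : List α} {o : α}
    (h : ((prefs a).filter (fun o => !(taken.contains o))).head? = some o) :
    SAevents prefs (a :: rest) taken = (a, o) :: SAevents prefs rest (o :: taken) := by
  rw [SAevents, h]

lemma SAevents_cons_none {A : Type*} [DecidableEq A] {α : Type*} [DecidableEq α]
    {prefs : A → List α} {a : A} {rest : List A} {taken : List α}
    (h : ((prefs a).filter (fun o => !(taken.contains o))).head? = none) :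
    SAevents prefs (a :: rest) taken = SAevents prefs rest taken := by
  rw [SAevents, h]

lemma my_exists_unpicked (taken : List (Fin m)) (hnd : taken.Nodup) (hlen : taken.length < m) :
    ∃ o : Fin m, o ∉ taken := by
  by_contra h
  push_neg at h
  have h1 : taken.toFinset = Finset.univ := Finset.eq_univ_iff_forall.mpr
    (fun o => List.mem_toFinset.mpr (h o))
  have h2 := List.toFinset_card_of_nodup hnd
  rw [h1] at h2
  simp at h2
  omega

lemma my_filter_ne_nil {prefs : Fin n → List (Fin m)} (hp : ∀ a o, o ∈ prefs a)
    (a : Fin n) {taken : List (Fin m)} (hnd : taken.Nodup) (hlen : taken.length < m) :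
    (prefs a).filter (fun o => !(taken.contains o)) ≠ [] := by
  obtain ⟨o, ho⟩ := my_exists_unpicked taken hnd hlen
  intro h
  have : o ∈ (prefs a).filter (fun o => !(taken.contains o)) := by
    rw [List.mem_filter]
    exact ⟨hp a o, by simpa using ho⟩
  rw [h] at this
  simp at this

end Helpers
section Helpers2
variable {n m : ℕ}

lemma my_run_spec {prefs : Fin n → List (Fin m)} (hp : ∀ a o, o ∈ prefs a) :
    ∀ (seq : List (Fin n)) (taken : List (Fin m)), taken.Nodup →
      taken.length + seq.length ≤ m →
      (SAevents prefs seq taken).map Prod.fst = seq ∧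
      (((SAevents prefs seq taken).map Prod.snd) ++ taken).Nodup := by
  intro seq
  induction seq with
  | nil =>
    intro taken h _
    simpa [SAevents] using h
  | cons a rest ih =>
    intro taken hnd hlen
    simp only [List.length_cons] at hlen
    have hlt : taken.length < m := by omega
    have hne := my_filter_ne_nil hp a hnd hlt
    have hhead : ((prefs a).filter (fun o => !(taken.contains o))).head? =
        some (((prefs a).filter (fun o => !(taken.contains o))).head hne) :=
      List.head?_eq_head hne
    set o := ((prefs a).filter (fun o => !(taken.contains o))).head hne with ho
    have hoF : o ∈ (prefs a).filter (fun o => !(taken.contains o)) := List.head_mem hne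
    have homem : o ∉ taken := by
      have := List.of_mem_filter hoF
      simpa using this
    have hev := SAevents_cons_some (rest := rest) hhead
    obtain ⟨h1, h2⟩ := ih (o :: taken) (List.nodup_cons.mpr ⟨homem, hnd⟩)
      (by simp only [List.length_cons]; omega)
    constructor
    · simp only [hev, List.map_cons, h1]
    · simp only [hev, List.map_cons, List.cons_append]
      exact List.nodup_middle.mp h2

end Helpers2
section Helpers3
variable {n m : ℕ}

lemma my_filter_head_lt {L : List (Fin m)} (hL : L.Nodup) {p : Fin m → Bool} {o : Fin m}
    {t : List (Fin m)} (h : L.filter p = o :: t) : ∀ x ∈ t, L.idxOf o < L.idxOf x := by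
  induction L with
  | nil => simp at h
  | cons b L' ihL =>
    rw [List.nodup_cons] at hL
    intro x hx
    by_cases hb : p b
    · rw [List.filter_cons_of_pos hb] at h
      injection h with h1 h2
      subst h1
      have hxL : x ∈ L' := List.mem_of_mem_filter (h2 ▸ hx)
      have hxb : x ≠ b := fun e => hL.1 (e ▸ hxL)
      rw [List.idxOf_cons_self, List.idxOf_cons_ne _ (by simpa using hxb.symm)]
      omega
    · rw [List.filter_cons_of_neg hb] at h
      have hoF : o ∈ L'.filter p := h ▸ List.mem_cons_self (a := o) (l := t)
      have hxF : x ∈ L'.filter p := h ▸ List.mem_cons_of_mem o hx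
      have hob : o ≠ b := by
        intro e
        exact hb (e ▸ List.of_mem_filter hoF)
      have hxb : x ≠ b := by
        intro e
        exact hb (e ▸ List.of_mem_filter hxF)
      rw [List.idxOf_cons_ne _ (by simpa using hob.symm),
        List.idxOf_cons_ne _ (by simpa using hxb.symm)]
      exact Nat.succ_lt_succ (ihL hL.2 h x hx)

end Helpers3
section Helpers4
variable {n m : ℕ}

lemma my_pick_top {prefs : Fin n → List (Fin m)} (hpnd : ∀ a, (prefs a).Nodup)
    (hp : ∀ a o, o ∈ prefs a) :
    ∀ (seq : List (Fin n)) (taken : List (Fin m)), taken.Nodup →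
      taken.length + seq.length ≤ m →
      ∀ (j : ℕ) (hj : j < ((SAevents prefs seq taken).map Prod.snd).length)
        (hj2 : j < seq.length) (o : Fin m),
        Prefers (prefs (seq.get ⟨j, hj2⟩)) o (((SAevents prefs seq taken).map Prod.snd).get ⟨j, hj⟩) →
        o ∈ taken ∨ o ∈ ((SAevents prefs seq taken).map Prod.snd).take j := by
  intro seq
  induction seq with
  | nil => intro taken _ _ j hj hj2; simp at hj2
  | cons a rest ih =>
    intro taken hnd hlen j hj hj2 o hpref
    simp only [List.length_cons] at hlen
    have hlt : taken.length < m := by omega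
    have hne := my_filter_ne_nil hp a hnd hlt
    have hhead : ((prefs a).filter (fun o => !(taken.contains o))).head? =
        some (((prefs a).filter (fun o => !(taken.contains o))).head hne) :=
      List.head?_eq_head hne
    set o0 := ((prefs a).filter (fun o => !(taken.contains o))).head hne with ho0
    have hoF : o0 ∈ (prefs a).filter (fun o => !(taken.contains o)) := List.head_mem hne
    have homem : o0 ∉ taken := by
      have := List.of_mem_filter hoF
      simpa using this
    have hev := SAevents_cons_some (rest := rest) hhead
    have hlist : (SAevents prefs (a :: rest) taken).map Prod.snd =
        o0 :: (SAevents prefs rest (o0 :: taken)).map Prod.snd := by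
      rw [hev]; rfl
    cases j with
    | zero =>
      have e0 : ((SAevents prefs (a :: rest) taken).map Prod.snd).get ⟨0, hj⟩ = o0 := by
        rw [List.get_eq_getElem]
        exact (List.getElem_of_eq hlist hj).trans (List.getElem_cons_zero _ _ _)
      rw [e0] at hpref
      have hpref' : Prefers (prefs a) o o0 := hpref
      left
      by_contra hot
      have hoFilt : o ∈ (prefs a).filter (fun x => !(taken.contains x)) := by
        rw [List.mem_filter]
        exact ⟨hp a o, by simpa using hot⟩
      obtain ⟨t, ht⟩ : ∃ t, (prefs a).filter (fun x => !(taken.contains x)) = o0 :: t := by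
        refine ⟨((prefs a).filter (fun x => !(taken.contains x))).tail, ?_⟩
        rw [ho0]
        exact (List.cons_head_tail hne).symm
      rw [ht] at hoFilt
      rcases List.mem_cons.mp hoFilt with rfl | hmem
      · exact absurd hpref' (lt_irrefl _)
      · exact absurd hpref' (not_lt.mpr (le_of_lt (my_filter_head_lt (hpnd a) ht o hmem)))
    | succ j' =>
      have hj' : j' < ((SAevents prefs rest (o0 :: taken)).map Prod.snd).length := by
        rw [hlist] at hj
        simpa using hj
      have hj2' : j' < rest.length := by
        simp only [List.length_cons] at hj2
        omega
      have e1 : ((SAevents prefs (a :: rest) taken).map Prod.snd).get ⟨j' + 1, hj⟩ =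
          ((SAevents prefs rest (o0 :: taken)).map Prod.snd).get ⟨j', hj'⟩ := by
        rw [List.get_eq_getElem, List.get_eq_getElem]
        exact (List.getElem_of_eq hlist hj).trans (List.getElem_cons_succ _ _ _ _)
      rw [e1] at hpref
      have hpref' : Prefers (prefs (rest.get ⟨j', hj2'⟩)) o
          (((SAevents prefs rest (o0 :: taken)).map Prod.snd).get ⟨j', hj'⟩) := hpref
      have key := ih (o0 :: taken) (List.nodup_cons.mpr ⟨homem, hnd⟩)
        (by simp only [List.length_cons]; omega) j' hj' hj2' o hpref'
      rw [hlist, List.take_succ_cons]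
      rcases key with hk | hk
      · rcases List.mem_cons.mp hk with rfl | hk'
        · exact Or.inr List.mem_cons_self
        · exact Or.inl hk'
      · exact Or.inr (List.mem_cons_of_mem _ hk)

end Helpers4
section Helpers5
variable {n m : ℕ}

lemma my_filter_cons_taken (L : List (Fin m)) (o : Fin m) (taken : List (Fin m)) :
    L.filter (fun v => !(List.contains (o :: taken) v)) =
      (L.filter (fun v => !(List.contains taken v))).filter (fun v => !(v == o)) := by
  rw [List.filter_filter]
  apply List.filter_congr
  intro x _
  rcases eq_or_ne x o with rfl | h
  · simp
  · by_cases hx : x ∈ taken <;> simp [h, hx]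

lemma my_common_run (L : List (Fin m)) :
    ∀ (seq : List (Fin n)) (taken : List (Fin m)),
      (L.filter (fun o => !(taken.contains o))).Nodup →
      SAevents (fun _ => L) seq taken = seq.zip (L.filter (fun o => !(taken.contains o))) := by
  intro seq
  induction seq with
  | nil => intro taken _; simp [SAevents]
  | cons a rest ih =>
    intro taken hnd
    cases hF : L.filter (fun o => !(taken.contains o)) with
    | nil =>
      have hnone : ((L.filter (fun o => !(taken.contains o)))).head? = none := by
        rw [hF]; rfl
      rw [SAevents_cons_none (prefs := fun _ => L) (a := a) (rest := rest) hnone]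
      rw [ih taken hnd, hF]
      simp
    | cons o t =>
      have hsome : ((L.filter (fun o => !(taken.contains o)))).head? = some o := by
        rw [hF]; rfl
      rw [SAevents_cons_some (prefs := fun _ => L) (rest := rest) hsome]
      have hnt : (L.filter (fun v => !(List.contains (o :: taken) v))).Nodup := by
        rw [my_filter_cons_taken]
        exact List.Nodup.filter _ hnd
      rw [ih (o :: taken) hnt]
      have ht : L.filter (fun v => !(List.contains (o :: taken) v)) = t := by
        rw [my_filter_cons_taken, hF]
        rw [List.filter_cons_of_neg (by simp)]
        rw [List.filter_eq_self]
        intro x hx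
        have : x ≠ o := by
          rw [hF] at hnd
          exact fun e => (List.nodup_cons.mp hnd).1 (e ▸ hx)
        simp [this]
      rw [ht, List.zip_cons_cons]

end Helpers5
lemma my_zip_map {β γ : Type*} (l : List (β × γ)) :
    (l.map Prod.fst).zip (l.map Prod.snd) = l := by
  induction l with
  | nil => rfl
  | cons a t ih => simp [ih]

lemma my_getElem_congr {β : Type*} {l : List β} {i j : ℕ} (h : i = j) (hi : i < l.length) :
    l[i] = l[j]'(h ▸ hi) := by subst h; rfl

/-- The assignment produced by SA on the bluff profile is Pareto optimal
with respect to pairwise comparisons. -/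
theorem bluff_outcome_pareto_optimal {n m : ℕ} (π : List (Fin n))
    (truth : Fin n → List (Fin m))
    (hπ : π.length = m) (htruth : ∀ i, IsRanking (truth i)) :
    ParetoOptPC truth (SAalloc π (bluff π truth)) := by
  classical
  have hpnd : ∀ a, (truth a).Nodup := fun a => (htruth a).1
  have hp : ∀ a o, o ∈ truth a := fun a o => (htruth a).2 o
  obtain ⟨hfst, hnd0⟩ := my_run_spec hp π [] List.nodup_nil (by simp [hπ])
  set L := pickOrder π truth with hLdef
  have hLsnd : L = (SAevents truth π []).map Prod.snd := rfl
  have hLnd : L.Nodup := by rw [hLsnd]; simpa using hnd0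
  have hLlen : L.length = m := by
    rw [hLsnd, List.length_map]
    have := congrArg List.length hfst
    rw [List.length_map] at this
    rw [this, hπ]
  have hLmem : ∀ o : Fin m, o ∈ L := by
    intro o
    have h1 : L.toFinset = Finset.univ := by
      apply Finset.eq_univ_of_card
      rw [List.toFinset_card_of_nodup hLnd, hLlen, Fintype.card_fin]
    rw [← List.mem_toFinset, h1]
    exact Finset.mem_univ o
  have hjL : ∀ {j : ℕ}, j < m → j < L.length := fun h => by rw [hLlen]; exact h
  have hjπ : ∀ {j : ℕ}, j < m → j < π.length := fun h => by rw [hπ]; exact h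
  have hidx : ∀ o : Fin m, L.idxOf o < m := fun o => by
    have := List.idxOf_lt_length_iff.mpr (hLmem o)
    omega
  -- the bluff run events
  have hfilt : L.filter (fun o => !(List.contains ([] : List (Fin m)) o)) = L :=
    List.filter_eq_self.mpr (fun x _ => rfl)
  have hevB : SAevents (bluff π truth) π [] = π.zip L := by
    have hb : bluff π truth = fun _ => L := rfl
    rw [hb, my_common_run L π [] (by rw [hfilt]; exact hLnd), hfilt]
  -- membership characterization
  have hmem : ∀ (o : Fin m) (i : Fin n),
      o ∈ SAalloc π (bluff π truth) i ↔ π[L.idxOf o]'(hjπ (hidx o)) = i := by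
    intro o i
    unfold SAalloc
    rw [hevB]
    simp only [List.mem_toFinset, List.mem_map, List.mem_filter]
    constructor
    · rintro ⟨⟨i', o'⟩, ⟨hmemz, hbeq⟩, hsnd⟩
      simp only at hsnd
      subst hsnd
      have hi' : i' = i := by simpa using hbeq
      subst hi'
      obtain ⟨j, hj, hjv⟩ := List.mem_iff_getElem.mp hmemz
      rw [List.getElem_zip] at hjv
      have h1 : π[j]'(by simpa [hπ, hLlen] using hj) = i' := congrArg Prod.fst hjv
      have h2 : L[j]'(by simpa [hπ, hLlen] using hj) = o' := congrArg Prod.snd hjv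
      have hidxj : L.idxOf o' = j := by rw [← h2]; exact List.Nodup.idxOf_getElem hLnd j _
      rw [my_getElem_congr hidxj (hjπ (hidx o'))]
      exact h1
    · intro h
      refine ⟨(i, o), ⟨?_, by simp⟩, rfl⟩
      rw [List.mem_iff_getElem]
      refine ⟨L.idxOf o, by simpa [hπ, hLlen] using hidx o, ?_⟩
      rw [List.getElem_zip]
      have : L[L.idxOf o]'(hjL (hidx o)) = o := List.getElem_idxOf _
      exact Prod.ext h this
  -- truthful top property
  have htop : ∀ (j : ℕ) (hj : j < m) (o : Fin m),
      Prefers (truth (π[j]'(hjπ hj))) o (L[j]'(hjL hj)) → o ∈ L.take j := by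
    intro j hj o hpref
    have hjev : j < ((SAevents truth π []).map Prod.snd).length := by
      rw [← hLsnd, hLlen]; exact hj
    have key := my_pick_top hpnd hp π [] List.nodup_nil (by simp [hπ]) j hjev (hjπ hj) o hpref
    rcases key with hk | hk
    · simp at hk
    · exact hk
  -- main argument
  rintro ⟨q, hq, hdom, i0, -, hstrict⟩
  choose f hinj hmaps hordf using hdom
  have hLget_mem_p : ∀ (j : ℕ) (hj : j < m),
      (L[j]'(hjL hj)) ∈ SAalloc π (bluff π truth) (π[j]'(hjπ hj)) := by
    intro j hj
    rw [hmem]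
    have hidxj : L.idxOf (L[j]'(hjL hj)) = j := List.Nodup.idxOf_getElem hLnd j _
    rw [my_getElem_congr hidxj (hjπ (hidx _))]
  have main : ∀ (j : ℕ) (hj : j < m),
      f (π[j]'(hjπ hj)) (L[j]'(hjL hj)) = L[j]'(hjL hj) ∧
      (L[j]'(hjL hj)) ∈ q (π[j]'(hjπ hj)) := by
    intro j
    induction j using Nat.strong_induction_on with
    | _ j IH =>
      intro hj
      have hpx := hLget_mem_p j hj
      rcases hordf (π[j]'(hjπ hj)) (L[j]'(hjL hj)) hpx with he | hpr
      · exact ⟨he, he ▸ hmaps _ _ hpx⟩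
      · exfalso
        have hfx : f (π[j]'(hjπ hj)) (L[j]'(hjL hj)) ∈ L.take j := htop j hj _ hpr
        obtain ⟨k, hk, hkv⟩ := List.mem_iff_getElem.mp hfx
        have hkj : k < j := by
          rw [List.length_take] at hk
          omega
        have hkm : k < m := by omega
        have hLk : L[k]'(hjL hkm) = f (π[j]'(hjπ hj)) (L[j]'(hjL hj)) := by
          rw [← hkv, List.getElem_take]
        obtain ⟨hfk, hqk⟩ := IH k hkj hkm
        have hfq : f (π[j]'(hjπ hj)) (L[j]'(hjL hj)) ∈ q (π[j]'(hjπ hj)) :=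
          hmaps _ _ hpx
        have hiq : π[j]'(hjπ hj) = π[k]'(hjπ hkm) := by
          obtain ⟨w, -, huniq⟩ := hq (L[k]'(hjL hkm))
          have h1 := huniq (π[j]'(hjπ hj)) (by rw [hLk]; exact hfq)
          have h2 := huniq (π[k]'(hjπ hkm)) hqk
          rw [h1, h2]
        have hpk : (L[k]'(hjL hkm)) ∈ SAalloc π (bluff π truth) (π[j]'(hjπ hj)) := by
          rw [hiq]
          exact hLget_mem_p k hkm
        have hfk' : f (π[j]'(hjπ hj)) (L[k]'(hjL hkm)) = L[k]'(hjL hkm) := by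
          rw [hiq]; exact hfk
        have heq : (L[k]'(hjL hkm)) = (L[j]'(hjL hj)) := by
          apply hinj (π[j]'(hjπ hj)) (Finset.mem_coe.mpr hpk) (Finset.mem_coe.mpr hpx)
          rw [hfk', hLk]
        have : k = j := by
          have e1 : L.idxOf (L[k]'(hjL hkm)) = k := List.Nodup.idxOf_getElem hLnd k _
          have e2 : L.idxOf (L[j]'(hjL hj)) = j := List.Nodup.idxOf_getElem hLnd j _
          rw [heq, e2] at e1
          omega
        omega
  have hps : ∀ (i : Fin n) (o : Fin m), o ∈ SAalloc π (bluff π truth) i → o ∈ q i := by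
    intro i o hoi
    have hio := (hmem o i).mp hoi
    have h2 := (main (L.idxOf o) (hidx o)).2
    rw [List.getElem_idxOf (hjL (hidx o))] at h2
    rw [hio] at h2
    exact h2
  have hqs : ∀ (i : Fin n) (o : Fin m), o ∈ q i → o ∈ SAalloc π (bluff π truth) i := by
    intro i o hoq
    have hopi' : o ∈ SAalloc π (bluff π truth) (π[L.idxOf o]'(hjπ (hidx o))) :=
      (hmem o _).mpr rfl
    have hoqi' := hps _ o hopi'
    obtain ⟨w, -, huniq⟩ := hq o
    have h1 := huniq i hoq
    have h2 := huniq _ hoqi'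
    rw [h1.trans h2.symm]
    exact hopi'
  have hpq : SAalloc π (bluff π truth) i0 = q i0 :=
    Finset.ext fun o => ⟨hps i0 o, hqs i0 o⟩
  exact hstrict ⟨id, Set.injOn_id _, fun o ho => by rw [hpq]; exact ho, fun o _ => Or.inl rfl⟩
end

section
/- An assignment may fail to be Pareto optimal with respect to pairwise comparisons even if it results from a reported profile that is a pure Nash equilibrium for all utilities consistent with the truthful ordinal preferences: there exist an instance with three agents, six items, picking sequence 123123, truthful preferences ≻, and a reported profile ≻′ such that ≻′ is a pure Nash equilibrium under every utility profile consistent with ≻, yet the assignment SA(π,≻′) is not Pareto optimal with respect to pairwise comparisons (under the truthful preferences ≻). -/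
open Finset

section Aux

set_option maxRecDepth 1000000
set_option maxHeartbeats 4000000

/-- Decidable sufficient condition for `AtLeastPC` for bundles of at most two items. -/
def DomPair {α : Type*} [DecidableEq α] (L : List α) (S T : Finset α) : Prop :=
  ∃ a ∈ S, ∃ b ∈ S, a ≠ b ∧ ∃ c ∈ T, ∃ d ∈ T, T ⊆ {c, d} ∧
    (c = a ∨ Prefers L a c) ∧ (d = b ∨ Prefers L b d)

instance {α : Type*} [DecidableEq α] (L : List α) (S T : Finset α) :
    Decidable (DomPair L S T) := by unfold DomPair; infer_instance

instance {α : Type*} [DecidableEq α] [Fintype α] (L : List α) :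
    Decidable (IsRanking L) := by unfold IsRanking; infer_instance

instance {A : Type*} {α : Type*} [Fintype A] [DecidableEq A] [DecidableEq α] [Fintype α]
    (q : A → Finset α) : Decidable (IsAssignment q) := by
  unfold IsAssignment ExistsUnique; infer_instance

lemma DomPair.atLeastPC {α : Type*} [DecidableEq α] {L : List α} {S T : Finset α}
    (h : DomPair L S T) : AtLeastPC (Prefers L) S T := by
  obtain ⟨a, ha, b, hb, hab, c, hc, d, hd, hT, hca, hdb⟩ := h
  refine ⟨fun x => if x = c then a else if x = d then b else x, ?_, ?_, ?_⟩
  · intro x hx y hy hxy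
    simp only [Finset.mem_coe] at hx hy
    have hx' := hT hx; have hy' := hT hy
    simp only [Finset.mem_insert, Finset.mem_singleton] at hx' hy'
    by_cases hdc : d = c
    · subst hdc
      rcases hx' with rfl | rfl <;> rcases hy' with rfl | rfl <;> rfl
    · rcases hx' with rfl | rfl <;> rcases hy' with rfl | rfl
      · rfl
      · simp only [if_pos rfl, if_neg hdc] at hxy; exact absurd hxy hab
      · simp only [if_pos rfl, if_neg hdc] at hxy; exact absurd hxy.symm hab
      · rfl
  · intro o ho
    have ho' := hT ho
    simp only [Finset.mem_insert, Finset.mem_singleton] at ho'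
    rcases ho' with rfl | rfl
    · simp only [if_pos rfl]; exact ha
    · by_cases hdc : o = c
      · simp only [if_pos hdc]; exact ha
      · simp only [if_neg hdc, if_pos rfl]; exact hb
  · intro o ho
    have ho' := hT ho
    simp only [Finset.mem_insert, Finset.mem_singleton] at ho'
    rcases ho' with rfl | rfl
    · simp only [if_pos rfl]
      rcases hca with h1 | h1
      · exact Or.inl h1.symm
      · exact Or.inr h1
    · by_cases hdc : o = c
      · simp only [if_pos hdc]
        subst hdc
        rcases hca with h1 | h1
        · exact Or.inl h1.symm
        · exact Or.inr h1
      · simp only [if_neg hdc, if_pos rfl]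
        rcases hdb with h1 | h1
        · exact Or.inl h1.symm
        · exact Or.inr h1

lemma util_mono {α : Type*} [DecidableEq α] {L : List α} {u : α → ℝ}
    (hu : Consistent L u) {S T : Finset α}
    (h : AtLeastPC (Prefers L) S T) : utilOf u T ≤ utilOf u S := by
  obtain ⟨f, hinj, hmap, hpref⟩ := h
  have h1 : utilOf u T ≤ ∑ o ∈ T, u (f o) := by
    refine Finset.sum_le_sum fun o ho => ?_
    rcases hpref o ho with h1 | h1
    · rw [h1]
    · exact le_of_lt ((hu.2 _ _).2 h1)
  have h2 : ∑ o ∈ Finset.image f T, u o = ∑ o ∈ T, u (f o) :=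
    Finset.sum_image fun x hx y hy hxy =>
      hinj (Finset.mem_coe.2 hx) (Finset.mem_coe.2 hy) hxy
  have h3 : ∑ o ∈ Finset.image f T, u o ≤ utilOf u S := by
    refine Finset.sum_le_sum_of_subset_of_nonneg ?_ fun x _ _ => le_of_lt (hu.1 x)
    intro x hx
    obtain ⟨o, ho, rfl⟩ := Finset.mem_image.1 hx
    exact hmap o ho
  calc utilOf u T ≤ ∑ o ∈ T, u (f o) := h1
    _ = ∑ o ∈ Finset.image f T, u o := h2.symm
    _ ≤ utilOf u S := h3

/-- All ways to insert `x` into a list. -/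
def insAll {α : Type*} (x : α) : List α → List (List α)
  | [] => [[x]]
  | y :: ys => (x :: y :: ys) :: (insAll x ys).map (y :: ·)

/-- All permutations of a list (structurally recursive, kernel reducible). -/
def permsOf {α : Type*} : List α → List (List α)
  | [] => [[]]
  | x :: xs => (permsOf xs).flatMap (insAll x)

lemma mem_insAll {α : Type*} (x : α) :
    ∀ l₁ l₂ : List α, (l₁ ++ x :: l₂) ∈ insAll x (l₁ ++ l₂)
  | [], l₂ => by cases l₂ <;> simp [insAll]
  | y :: l₁, l₂ => by
    simp only [List.cons_append, insAll, List.mem_cons, List.mem_map]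
    exact Or.inr ⟨l₁ ++ x :: l₂, mem_insAll x l₁ l₂, rfl⟩

lemma mem_permsOf {α : Type*} : ∀ {l r : List α}, r.Perm l → r ∈ permsOf l := by
  intro l
  induction l with
  | nil => intro r h; simp [permsOf, h.eq_nil]
  | cons x xs ih =>
    intro r h
    have hx : x ∈ r := h.mem_iff.2 List.mem_cons_self
    obtain ⟨l₁, l₂, rfl⟩ := List.append_of_mem hx
    have hp : (l₁ ++ l₂).Perm xs := (List.perm_middle.symm.trans h).cons_inv
    exact List.mem_flatMap.2 ⟨l₁ ++ l₂, ih hp, mem_insAll x l₁ l₂⟩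

def myTruth : Fin 3 → List (Fin 6) := ![[4,0,3,2,5,1],[2,5,3,0,1,4],[3,0,2,5,4,1]]
def myProf : Fin 3 → List (Fin 6) := ![[3,4,5,2,1,0],[2,4,0,5,1,3],[0,4,2,3,1,5]]
def myQ : Fin 3 → Finset (Fin 6) := ![{0,4},{2,5},{1,3}]
def myV : Fin 6 → ℕ := ![5,1,3,4,6,2]

lemma ranking_mem_perms {r : List (Fin 6)} (h : IsRanking r) :
    r ∈ permsOf [0,1,2,3,4,5] := by
  refine mem_permsOf ((List.perm_ext_iff_of_nodup h.1 (by decide)).2 fun a => ?_)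
  exact iff_of_true (h.2 a) (by fin_cases a <;> decide)

lemma keyDom : ∀ r ∈ permsOf ([0,1,2,3,4,5] : List (Fin 6)), ∀ i : Fin 3,
    DomPair (myTruth i) (SAalloc [0,1,2,0,1,2] myProf i)
      (SAalloc [0,1,2,0,1,2] (Function.update myProf i r) i) := by decide

end Aux

/-- There is a three-agent, six-item instance with picking sequence 123123
and a reported profile that is a PNE under every consistent utility profile, whose
outcome is nevertheless not Pareto optimal w.r.t. pairwise comparisons. -/
theorem PNE_outcome_not_pareto_optimal :
    ∃ truth prof : Fin 3 → List (Fin 6),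
      (∀ i, IsRanking (truth i)) ∧ (∀ i, IsRanking (prof i)) ∧
      (∀ u : Fin 3 → Fin 6 → ℝ, (∀ i, Consistent (truth i) (u i)) →
        IsPNE [0, 1, 2, 0, 1, 2] prof u) ∧
      ¬ ParetoOptPC truth (SAalloc [0, 1, 2, 0, 1, 2] prof) := by
  refine ⟨myTruth, myProf, by decide, by decide, ?_, ?_⟩
  · intro u hu i r hr
    exact util_mono (hu i) (keyDom r (ranking_mem_perms hr) i).atLeastPC
  · intro hPO
    have hQdom : ∀ i, DomPair (myTruth i) (myQ i)
        (SAalloc [0,1,2,0,1,2] myProf i) := by decide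
    have hu0 : Consistent (myTruth 0) (fun o => (myV o : ℝ)) := by
      constructor
      · intro o
        show (0:ℝ) < (myV o : ℝ)
        exact_mod_cast (by decide : ∀ o, 0 < myV o) o
      · intro o o'
        simp only [gt_iff_lt, Nat.cast_lt]
        exact (by decide :
          ∀ o o' : Fin 6, myV o' < myV o ↔ Prefers (myTruth 0) o o') o o'
    refine hPO ⟨myQ, by decide, fun i => (hQdom i).atLeastPC, 0,
      (hQdom 0).atLeastPC, fun hA => ?_⟩
    have hle := util_mono hu0 hA
    have hp0 : SAalloc [0,1,2,0,1,2] myProf 0 = {3,4} := by decide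
    rw [hp0] at hle
    have hq0 : myQ 0 = {0,4} := by decide
    rw [hq0] at hle
    rw [utilOf, utilOf, Finset.sum_pair (by decide : (3:Fin 6) ≠ 4),
      Finset.sum_pair (by decide : (0:Fin 6) ≠ 4)] at hle
    norm_num [myV] at hle
    exact absurd hle (by decide)
end

section
/- Token characterization of agent 2's achievable allocations in the two-agent game: fix a picking sequence π of length m for agents {1,2} and a ranking R reported by agent 1, and list the items as r_1, r_2, …, r_m in decreasing order of R. Let T_0 be the set of positions j ∈ {1,…,m} at which π(j) = 2. Then a set B of items is achievable by agent 2 (i.e., there exists a report ≻′_2 with SA(π,(R,≻′_2))(2) = B) if and only if B = { r_j : j ∈ T } for some set of positions T with |T| = |T_0| that can be obtained from T_0 by a finite sequence of moves, each move replacing one position j ∈ T by a position j′ > j not currently in T. -/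
open Finset

section TCAux

lemma tc_head?_filter_decomp {β : Type*} (p : β → Bool) :
    ∀ (l : List β) (x : β), (l.filter p).head? = some x →
      ∃ l1 l2, l = l1 ++ x :: l2 ∧ (∀ y ∈ l1, p y = false) ∧ p x = true := by
  intro l
  induction l with
  | nil => simp
  | cons a l ih =>
    intro x h
    by_cases hpa : p a
    · rw [List.filter_cons_of_pos hpa] at h
      simp only [List.head?_cons, Option.some.injEq] at h
      subst h
      exact ⟨[], l, rfl, by simp, hpa⟩
    · rw [List.filter_cons_of_neg hpa] at h
      obtain ⟨l1, l2, rfl, h1, h2⟩ := ih x h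
      exact ⟨a :: l1, l2, rfl, by simpa [hpa] using h1, h2⟩

lemma tc_head?_filter_eq {β : Type*} (p : β → Bool) (l1 l2 : List β) (x : β)
    (h1 : ∀ y ∈ l1, p y = false) (h2 : p x = true) :
    (((l1 ++ x :: l2)).filter p).head? = some x := by
  rw [List.filter_append, List.filter_eq_nil_iff.2 (by simpa using h1), List.nil_append,
    List.filter_cons_of_pos h2]
  rfl

lemma tc_exists_pick {m : ℕ} (Rk : List (Fin m)) (hRk : ∀ o, o ∈ Rk)
    (tk : List (Fin m)) (htk : tk.length < m) :
    ∃ x, (Rk.filter (fun o => !(tk.contains o))).head? = some x := by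
  have hex : ∃ o : Fin m, o ∉ tk := by
    by_contra h
    push_neg at h
    have h1 : (Finset.univ : Finset (Fin m)).card ≤ tk.toFinset.card :=
      Finset.card_le_card (fun o _ => List.mem_toFinset.2 (h o))
    have h2 := tk.toFinset_card_le
    simp at h1
    omega
  obtain ⟨o, ho⟩ := hex
  have hmem : o ∈ Rk.filter (fun o => !(tk.contains o)) :=
    List.mem_filter.2 ⟨hRk o, by simpa using ho⟩
  cases h : (Rk.filter (fun o => !(tk.contains o))).head? with
  | none => rw [List.head?_eq_none_iff] at h; rw [h] at hmem; simp at hmem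
  | some x => exact ⟨x, rfl⟩

lemma tc_prefix_succ (S : Finset ℕ) (j : ℕ) :
    (S ∩ range (j+1)).card = (S ∩ range j).card + (if j ∈ S then 1 else 0) := by
  rw [Finset.range_add_one]
  by_cases hj : j ∈ S
  · rw [Finset.inter_insert_of_mem hj, if_pos hj,
      Finset.card_insert_of_notMem (by simp)]
  · rw [Finset.inter_insert_of_notMem hj, if_neg hj, add_zero]

lemma tc_inter_range_of_le {S : Finset ℕ} {m x : ℕ} (hS : ∀ j ∈ S, j < m) (hx : m ≤ x) :
    S ∩ range x = S := by
  apply Finset.inter_eq_left.2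
  intro j hj
  exact mem_range.2 (lt_of_lt_of_le (hS j hj) hx)

lemma tc_countP_range (l : List (Fin 2)) :
    ((range l.length).filter (fun j => l.getD j 0 = 1)).card
      = (l.filter (fun a => a == 1)).length := by
  rw [← Nat.count_eq_card_filter_range]
  unfold Nat.count
  rw [← List.countP_eq_length_filter]
  induction l with
  | nil => simp
  | cons a l ih =>
    rw [List.length_cons, List.range_succ_eq_map, List.countP_cons, List.countP_cons,
      List.countP_map]
    simp only [List.getD_cons_zero, List.getD_cons_succ, Function.comp_def]
    rw [← ih]
    simp [beq_iff_eq]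

lemma tc_move_step {m : ℕ} {T T' : Finset ℕ} (h : MoveStep m T T') (hT : ∀ j ∈ T, j < m) :
    T'.card = T.card ∧ (∀ j ∈ T', j < m) ∧
      ∀ x, (T' ∩ range x).card ≤ (T ∩ range x).card := by
  obtain ⟨j, hj, j', hj'm, hj'T, hjj', rfl⟩ := h
  have hje : j' ∉ T.erase j := fun h => hj'T (Finset.mem_of_mem_erase h)
  have hcard : (insert j' (T.erase j)).card = T.card := by
    rw [Finset.card_insert_of_notMem hje, Finset.card_erase_of_mem hj]
    have : 1 ≤ T.card := Finset.card_pos.2 ⟨j, hj⟩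
    omega
  refine ⟨hcard, ?_, ?_⟩
  · intro y hy
    rcases Finset.mem_insert.1 hy with rfl | hy
    · exact hj'm
    · exact hT y (Finset.mem_of_mem_erase hy)
  · intro x
    by_cases hx : x ≤ j'
    · rw [Finset.insert_inter_of_notMem (by simp; omega)]
      exact Finset.card_le_card (Finset.inter_subset_inter (Finset.erase_subset _ _) le_rfl)
    · rw [Finset.insert_inter_of_mem (by simp; omega), Finset.erase_inter]
      have hjx : j ∈ T ∩ range x := Finset.mem_inter.2 ⟨hj, Finset.mem_range.2 (by omega)⟩
      have h1 : 1 ≤ (T ∩ range x).card := Finset.card_pos.2 ⟨j, hjx⟩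
      have := Finset.card_insert_le j' ((T ∩ range x).erase j)
      rw [Finset.card_erase_of_mem hjx] at this
      omega

lemma tc_reach_dom {m : ℕ} {T0 T : Finset ℕ}
    (hreach : Relation.ReflTransGen (MoveStep m) T0 T) (hT0 : ∀ j ∈ T0, j < m) :
    T.card = T0.card ∧ (∀ j ∈ T, j < m) ∧
      ∀ x, (T ∩ range x).card ≤ (T0 ∩ range x).card := by
  induction hreach with
  | refl => exact ⟨rfl, hT0, fun x => le_rfl⟩
  | tail hab hbc ih =>
    obtain ⟨ihc, ihb, ihp⟩ := ih
    obtain ⟨hc, hb, hp⟩ := tc_move_step hbc ihb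
    exact ⟨hc.trans ihc, hb, fun x => (hp x).trans (ihp x)⟩

lemma tc_dom_eq {m : ℕ} {T0 T : Finset ℕ} (hT0 : ∀ j ∈ T0, j < m) (hT : ∀ j ∈ T, j < m)
    (hc : T.card = T0.card)
    (hμ : ∑ x ∈ range (m+1), ((T0 ∩ range x).card - (T ∩ range x).card) = 0)
    (hd : ∀ x, (T ∩ range x).card ≤ (T0 ∩ range x).card) : T0 = T := by
  have heq : ∀ x, x ≤ m → (T0 ∩ range x).card = (T ∩ range x).card := by
    intro x hx
    have := Finset.sum_eq_zero_iff.1 hμ x (mem_range.2 (by omega))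
    have := hd x
    omega
  ext j
  by_cases hjm : j < m
  · have h1 := heq j (by omega)
    have h2 := heq (j+1) (by omega)
    have h3 := tc_prefix_succ T0 j
    have h4 := tc_prefix_succ T j
    by_cases hj0 : j ∈ T0 <;> by_cases hjT : j ∈ T <;>
      simp [hj0, hjT] at h3 h4 ⊢ <;> omega
  · constructor
    · intro h; exact absurd (hT0 j h) hjm
    · intro h; exact absurd (hT j h) hjm

lemma tc_dom_reach {m : ℕ} (T : Finset ℕ) (hT : ∀ j ∈ T, j < m) :
    ∀ (n : ℕ) (T0 : Finset ℕ), (∀ j ∈ T0, j < m) → T.card = T0.card →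
    (∀ x, (T ∩ range x).card ≤ (T0 ∩ range x).card) →
    (∑ x ∈ range (m+1), ((T0 ∩ range x).card - (T ∩ range x).card)) ≤ n →
    Relation.ReflTransGen (MoveStep m) T0 T := by
  intro n
  induction n with
  | zero =>
    intro T0 hT0 hc hd hμ
    rw [tc_dom_eq hT0 hT hc (by omega) hd]
  | succ n ih =>
    intro T0 hT0 hc hd hμ
    by_cases heq : T0 = T
    · rw [heq]
    -- find j : min of symmetric difference
    have hD : ((T0 \ T) ∪ (T \ T0)).Nonempty := by
      rw [Finset.nonempty_iff_ne_empty]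
      intro h
      rw [Finset.union_eq_empty, Finset.sdiff_eq_empty_iff_subset,
        Finset.sdiff_eq_empty_iff_subset] at h
      exact heq (Finset.Subset.antisymm h.1 h.2)
    set j := ((T0 \ T) ∪ (T \ T0)).min' hD with hjdef
    have hjD : j ∈ (T0 \ T) ∪ (T \ T0) := Finset.min'_mem _ _
    have hagree : ∀ y, y < j → (y ∈ T0 ↔ y ∈ T) := by
      intro y hy
      by_contra hcon
      have hyD : y ∈ (T0 \ T) ∪ (T \ T0) := by
        simp only [Finset.mem_union, Finset.mem_sdiff]
        tauto
      exact absurd (Finset.min'_le _ y hyD) (by omega)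
    have hbelow : ∀ x, x ≤ j → T0 ∩ range x = T ∩ range x := by
      intro x hx
      ext y
      simp only [Finset.mem_inter, mem_range]
      constructor
      · rintro ⟨h1, h2⟩; exact ⟨(hagree y (by omega)).1 h1, h2⟩
      · rintro ⟨h1, h2⟩; exact ⟨(hagree y (by omega)).2 h1, h2⟩
    have hjT0 : j ∈ T0 ∧ j ∉ T := by
      rcases Finset.mem_union.1 hjD with h | h
      · exact ⟨(Finset.mem_sdiff.1 h).1, (Finset.mem_sdiff.1 h).2⟩
      · exfalso
        obtain ⟨hjT, hjnT0⟩ := Finset.mem_sdiff.1 h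
        have h1 := tc_prefix_succ T0 j
        have h2 := tc_prefix_succ T j
        have h3 : (T0 ∩ range j).card = (T ∩ range j).card := by rw [hbelow j le_rfl]
        have h4 := hd (j+1)
        simp [hjT, hjnT0] at h1 h2
        omega
    obtain ⟨hjT0m, hjnT⟩ := hjT0
    have hjm : j < m := hT0 j hjT0m
    -- existence of a free slot j' above j
    have hIoo : ∃ x ∈ Finset.Ioo j m, x ∉ T0 := by
      by_contra hcon
      push_neg at hcon
      -- T0 is large
      have hsub : (T0 ∩ range j) ∪ insert j (Finset.Ioo j m) ⊆ T0 := by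
        intro y hy
        rcases Finset.mem_union.1 hy with h | h
        · exact (Finset.mem_inter.1 h).1
        · rcases Finset.mem_insert.1 h with rfl | h
          · exact hjT0m
          · exact hcon y h
      have hdisj : Disjoint (T0 ∩ range j) (insert j (Finset.Ioo j m)) := by
        rw [Finset.disjoint_left]
        intro y hy hy'
        have := mem_range.1 (Finset.mem_inter.1 hy).2
        rcases Finset.mem_insert.1 hy' with rfl | h
        · omega
        · have := Finset.mem_Ioo.1 h; omega
      have hcard1 : (T0 ∩ range j).card + (m - j) ≤ T0.card := by
        have := Finset.card_le_card hsub
        rw [Finset.card_union_of_disjoint hdisj,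
          Finset.card_insert_of_notMem (by simp), Nat.card_Ioo] at this
        omega
      -- T is small
      have hsplit : T.card = (T ∩ range (j+1)).card + (T \ range (j+1)).card :=
        (Finset.card_inter_add_card_sdiff T (range (j+1))).symm
      have hsub2 : T \ range (j+1) ⊆ Finset.Ioo j m := by
        intro y hy
        obtain ⟨h1, h2⟩ := Finset.mem_sdiff.1 hy
        rw [mem_range] at h2
        exact Finset.mem_Ioo.2 ⟨by omega, hT y h1⟩
      have hc2 : (T ∩ range (j+1)).card = (T0 ∩ range j).card := by
        have h1 := tc_prefix_succ T j
        rw [if_neg hjnT, add_zero] at h1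
        rw [h1, hbelow j le_rfl]
      have := Finset.card_le_card hsub2
      rw [Nat.card_Ioo] at this
      omega
    -- the minimal free slot j'
    have hFne : ((Finset.Ioo j m).filter (fun x => x ∉ T0)).Nonempty := by
      obtain ⟨x, h1, h2⟩ := hIoo
      exact ⟨x, Finset.mem_filter.2 ⟨h1, by simpa using h2⟩⟩
    set j' := ((Finset.Ioo j m).filter (fun x => x ∉ T0)).min' hFne with hj'def
    have hj'mem := Finset.min'_mem _ hFne
    rw [Finset.mem_filter, Finset.mem_Ioo] at hj'mem
    obtain ⟨⟨hjj', hj'm⟩, hj'nT0'⟩ := hj'mem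
    have hfill : ∀ y, j < y → y < j' → y ∈ T0 := by
      intro y h1 h2
      by_contra hy
      have : y ∈ (Finset.Ioo j m).filter (fun x => x ∉ T0) :=
        Finset.mem_filter.2 ⟨Finset.mem_Ioo.2 ⟨h1, by omega⟩, by simpa using hy⟩
      exact absurd (Finset.min'_le _ y this) (by omega)
    set T1 := insert j' (T0.erase j) with hT1def
    have hmove : MoveStep m T0 T1 := ⟨j, hjT0m, j', hj'm, hj'nT0', hjj', rfl⟩
    -- prefix cards of T1
    have hc1a : ∀ x, x ≤ j' → T1 ∩ range x = (T0 ∩ range x).erase j := by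
      intro x hx
      rw [hT1def, Finset.insert_inter_of_notMem (by simp; omega), Finset.erase_inter]
    have hc1b : ∀ x, j' < x → (T1 ∩ range x).card = (T0 ∩ range x).card := by
      intro x hx
      have hjx : j ∈ T0 ∩ range x := Finset.mem_inter.2 ⟨hjT0m, mem_range.2 (by omega)⟩
      rw [hT1def, Finset.insert_inter_of_mem (mem_range.2 (by omega)), Finset.erase_inter,
        Finset.card_insert_of_notMem
          (fun h => hj'nT0' (Finset.mem_inter.1 (Finset.mem_of_mem_erase h)).1),
        Finset.card_erase_of_mem hjx]
      have : 1 ≤ (T0 ∩ range x).card := Finset.card_pos.2 ⟨j, hjx⟩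
      omega
    have hc1le : ∀ x, (T1 ∩ range x).card ≤ (T0 ∩ range x).card := by
      intro x
      by_cases hx : x ≤ j'
      · rw [hc1a x hx]; exact Finset.card_le_card (Finset.erase_subset _ _)
      · rw [hc1b x (by omega)]
    -- domination of T by T1
    have hd1 : ∀ x, (T ∩ range x).card ≤ (T1 ∩ range x).card := by
      intro x
      rcases le_or_gt x j with hx | hx
      · rw [hc1a x (by omega), Finset.erase_eq_of_notMem (by simp; omega), ← hbelow x hx]
      · rcases le_or_gt x j' with hx2 | hx2
        · rw [hc1a x hx2, Finset.card_erase_of_mem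
            (Finset.mem_inter.2 ⟨hjT0m, mem_range.2 (by omega)⟩)]
          -- T ∩ range x is small
          have hTsub : T ∩ range x ⊆ (T ∩ range j) ∪ Finset.Ico (j+1) x := by
            intro y hy
            obtain ⟨h1, h2⟩ := Finset.mem_inter.1 hy
            rw [mem_range] at h2
            rcases lt_trichotomy y j with h | rfl | h
            · exact Finset.mem_union_left _ (Finset.mem_inter.2 ⟨h1, mem_range.2 h⟩)
            · exact absurd h1 hjnT
            · exact Finset.mem_union_right _ (Finset.mem_Ico.2 ⟨by omega, h2⟩)
          have hTcard : (T ∩ range x).card ≤ (T ∩ range j).card + (x - (j+1)) := by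
            have h1 := Finset.card_le_card hTsub
            have h2 := Finset.card_union_le (T ∩ range j) (Finset.Ico (j+1) x)
            rw [Nat.card_Ico] at h2
            omega
          -- T0 ∩ range x is big
          have hT0sub : (T0 ∩ range j) ∪ insert j (Finset.Ico (j+1) x) ⊆ T0 ∩ range x := by
            intro y hy
            rcases Finset.mem_union.1 hy with h | h
            · obtain ⟨h1, h2⟩ := Finset.mem_inter.1 h
              rw [mem_range] at h2
              exact Finset.mem_inter.2 ⟨h1, mem_range.2 (by omega)⟩
            · rcases Finset.mem_insert.1 h with rfl | h
              · exact Finset.mem_inter.2 ⟨hjT0m, mem_range.2 (by omega)⟩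
              · obtain ⟨h1, h2⟩ := Finset.mem_Ico.1 h
                exact Finset.mem_inter.2 ⟨hfill y (by omega) (by omega), mem_range.2 h2⟩
          have hdisj2 : Disjoint (T0 ∩ range j) (insert j (Finset.Ico (j+1) x)) := by
            rw [Finset.disjoint_left]
            intro y hy hy'
            have := mem_range.1 (Finset.mem_inter.1 hy).2
            rcases Finset.mem_insert.1 hy' with rfl | h
            · omega
            · have := Finset.mem_Ico.1 h; omega
          have hT0card : (T0 ∩ range j).card + 1 + (x - (j+1)) ≤ (T0 ∩ range x).card := by
            have := Finset.card_le_card hT0sub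
            rw [Finset.card_union_of_disjoint hdisj2,
              Finset.card_insert_of_notMem (by simp), Nat.card_Ico] at this
            omega
          have hbj := hbelow j le_rfl
          rw [hbj] at hT0card
          omega
        · rw [hc1b x hx2]; exact hd x
    -- measure decreases
    have hμ1 : (∑ x ∈ range (m+1), ((T1 ∩ range x).card - (T ∩ range x).card)) < 
        ∑ x ∈ range (m+1), ((T0 ∩ range x).card - (T ∩ range x).card) := by
      apply Finset.sum_lt_sum
      · intro x _
        have := hc1le x
        have := hd1 x
        omega
      · refine ⟨j+1, mem_range.2 (by omega), ?_⟩
        have h1 : (T1 ∩ range (j+1)).card + 1 = (T0 ∩ range (j+1)).card := by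
          rw [hc1a _ (by omega), Finset.card_erase_of_mem
            (Finset.mem_inter.2 ⟨hjT0m, mem_range.2 (by omega)⟩)]
          have : 1 ≤ (T0 ∩ range (j+1)).card :=
            Finset.card_pos.2 ⟨j, Finset.mem_inter.2 ⟨hjT0m, mem_range.2 (by omega)⟩⟩
          omega
        have h2 := hd1 (j+1)
        omega
    have hcard1 : T.card = T1.card := by
      rw [hc, hT1def, Finset.card_insert_of_notMem
        (fun h => hj'nT0' (Finset.mem_of_mem_erase h)), Finset.card_erase_of_mem hjT0m]
      have : 1 ≤ T0.card := Finset.card_pos.2 ⟨j, hjT0m⟩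
      omega
    have hT1m : ∀ y ∈ T1, y < m := by
      intro y hy
      rcases Finset.mem_insert.1 hy with rfl | hy
      · exact hj'm
      · exact hT0 y (Finset.mem_of_mem_erase hy)
    exact Relation.ReflTransGen.head hmove (ih T1 hT1m hcard1 hd1 (by omega))

end TCAux

section TCFwd

lemma tc_ranking_length {m : ℕ} {R : List (Fin m)} (hR : IsRanking R) : R.length = m := by
  have h1 : R.toFinset = Finset.univ :=
    Finset.eq_univ_iff_forall.2 (fun o => List.mem_toFinset.2 (hR.2 o))
  have h2 := List.toFinset_card_of_nodup hR.1
  rw [h1] at h2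
  simpa using h2.symm

lemma tc_indexOf_getElem {m : ℕ} {R : List (Fin m)} (hnd : R.Nodup) (j : ℕ)
    (hj : j < R.length) : R.idxOf (R[j]) = j := by
  have hmem : R[j] ∈ R := List.getElem_mem hj
  have hlt : R.idxOf (R[j]) < R.length := List.idxOf_lt_length_iff.2 hmem
  have := List.getElem_idxOf hlt (xs := R) (x := R[j])
  exact (hnd.getElem_inj_iff).1 this

lemma tc_fwd {m : ℕ} (π : List (Fin 2)) (hπ : π.length = m)
    (prefs : Fin 2 → List (Fin m)) (hpref : ∀ a, IsRanking (prefs a)) :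
    ∀ (L : List (Fin 2)) (t : ℕ) (tk : List (Fin m)), π.drop t = L →
      tk.length = t → tk.Nodup →
      (SAevents prefs L tk).length = L.length ∧
      (SAevents prefs L tk).map Prod.fst = L ∧
      ((SAevents prefs L tk).map Prod.snd).Nodup ∧
      (∀ p ∈ SAevents prefs L tk, p.2 ∉ tk) ∧
      (∀ i (hi : i < (SAevents prefs L tk).length),
        ((SAevents prefs L tk)[i].1 = 0 →
          ((prefs 0).idxOf (SAevents prefs L tk)[i].2) ≤ t + i)) := by
  intro L
  induction L with
  | nil =>
    intro t tk _ _ _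
    simp [SAevents]
  | cons a L ih =>
    intro t tk hdrop htl htnd
    have htm : t < m := by
      have h1 : (π.drop t).length = L.length + 1 := by rw [hdrop]; simp
      rw [List.length_drop, hπ] at h1
      omega
    obtain ⟨x, hx⟩ := tc_exists_pick (prefs a) (hpref a).2 tk (by omega)
    obtain ⟨l1, l2, hdec, hl1, hpx⟩ := tc_head?_filter_decomp _ _ _ hx
    have hxtk : x ∉ tk := by simpa using hpx
    have hdrop' : π.drop (t+1) = L := by
      have h := congrArg List.tail hdrop
      rw [List.tail_drop] at h
      simpa using h
    obtain ⟨ih1, ih2, ih3, ih4, ih5⟩ :=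
      ih (t+1) (x :: tk) hdrop' (by simp [htl]) (List.nodup_cons.2 ⟨hxtk, htnd⟩)
    rw [SAevents, hx]
    refine ⟨by simpa using ih1, by simpa using ih2, ?_, ?_, ?_⟩
    · rw [List.map_cons, List.nodup_cons]
      refine ⟨?_, ih3⟩
      intro hmem
      obtain ⟨p, hp, hp2⟩ := List.mem_map.1 hmem
      exact (ih4 p hp) (hp2 ▸ List.mem_cons_self)
    · intro p hp
      rcases List.mem_cons.1 hp with rfl | hp
      · exact hxtk
      · exact fun h => (ih4 p hp) (List.mem_cons_of_mem x h)
    · intro i hi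
      match i with
      | 0 =>
        intro ha0
        simp only [List.getElem_cons_zero] at ha0 ⊢
        subst ha0
        -- indexOf x (l1 ++ x :: l2) = l1.length ≤ t
        have hnd0 : (prefs 0).Nodup := (hpref 0).1
        rw [hdec, List.nodup_append] at hnd0
        have hxl1 : x ∉ l1 := fun hx1 => hnd0.2.2 x hx1 x List.mem_cons_self rfl
        have hidx : (prefs 0).idxOf x = l1.length := by
          rw [hdec]
          rw [List.idxOf_append_of_notMem hxl1]
          simp
        rw [hdec] at hidx ⊢
        rw [hidx]
        have hsub : l1.toFinset ⊆ tk.toFinset := by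
          intro y hy
          rw [List.mem_toFinset] at hy ⊢
          have := hl1 y hy
          simpa using this
        have h1 : l1.toFinset.card = l1.length := List.toFinset_card_of_nodup hnd0.1
        have h2 := tk.toFinset_card_le
        have h3 := Finset.card_le_card hsub
        omega
      | (i+1) =>
        intro ha0
        simp only [List.getElem_cons_succ] at ha0 ⊢
        have := ih5 i (by simpa using Nat.lt_of_succ_lt_succ hi) ha0
        omega

end TCFwd

section TCForwardAssembly

lemma tc_fin2 (a : Fin 2) : a = 0 ∨ a = 1 := by revert a; decide

lemma tc_filter_fst_len {γ δ : Type*} (E : List (γ × δ)) (g : γ → Bool) :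
    (E.filter (fun p => g p.1)).length = ((E.map Prod.fst).filter g).length := by
  induction E with
  | nil => simp
  | cons a E ih =>
    rw [List.map_cons, List.filter_cons, List.filter_cons]
    cases h : g a.1 <;> simp [h, ih]

lemma tc_filter2 (l : List (Fin 2)) :
    (l.filter (fun a => a == 0)).length + (l.filter (fun a => a == 1)).length = l.length := by
  induction l with
  | nil => simp
  | cons a l ih =>
    rcases (tc_fin2 a) with rfl | rfl <;>
      simp [List.filter_cons] <;> omega

lemma tc_card_image_idx {m : ℕ} {R : List (Fin m)} (hR : IsRanking R) (S : Finset (Fin m)) :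
    (S.image (fun o => R.idxOf o)).card = S.card :=
  Finset.card_image_of_injOn (fun o _ o' _ h => (List.idxOf_inj (hR.2 o)).1 h)

lemma tc_card_univ_lt {m : ℕ} {R : List (Fin m)} (hR : IsRanking R) {x : ℕ} (hx : x ≤ m) :
    (Finset.univ.filter (fun o : Fin m => R.idxOf o < x)).card = x := by
  have hRlen := tc_ranking_length hR
  have himg : (Finset.univ.filter (fun o : Fin m => R.idxOf o < x)).image
      (fun o => R.idxOf o) = range x := by
    apply Finset.Subset.antisymm
    · intro j hj
      obtain ⟨o, ho, rfl⟩ := Finset.mem_image.1 hj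
      exact mem_range.2 (Finset.mem_filter.1 ho).2
    · intro j hj
      rw [mem_range] at hj
      have hjR : j < R.length := by omega
      refine Finset.mem_image.2 ⟨R[j], Finset.mem_filter.2 ⟨Finset.mem_univ _, ?_⟩, ?_⟩
      · rw [tc_indexOf_getElem hR.1 j hjR]; exact hj
      · exact tc_indexOf_getElem hR.1 j hjR
  have := tc_card_image_idx hR (Finset.univ.filter (fun o : Fin m => R.idxOf o < x))
  rw [himg, Finset.card_range] at this
  exact this.symm

lemma tc_snd_inj {m : ℕ} {E : List ((Fin 2) × (Fin m))} (hnd : (E.map Prod.snd).Nodup) :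
    ∀ p ∈ E, ∀ q ∈ E, p.2 = q.2 → p = q := by
  intro p hp q hq hpq
  obtain ⟨i, hi, rfl⟩ := List.getElem_of_mem hp
  obtain ⟨j, hj, rfl⟩ := List.getElem_of_mem hq
  have hij : i = j := by
    have h1 : (E.map Prod.snd)[i]'(by simpa using hi) = (E.map Prod.snd)[j]'(by simpa using hj) := by
      simpa using hpq
    exact (hnd.getElem_inj_iff).1 h1
  subst hij
  rfl

lemma tc_forward {m : ℕ} (π : List (Fin 2)) (hπ : π.length = m) (R r2 : List (Fin m))
    (hR : IsRanking R) (hr2 : IsRanking r2) :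
    ((SAalloc π ![R, r2] 1).image (fun o => R.idxOf o)).card
        = ((range m).filter (fun j => π.getD j 0 = 1)).card ∧
    (∀ j ∈ (SAalloc π ![R, r2] 1).image (fun o => R.idxOf o), j < m) ∧
    (∀ x, (((SAalloc π ![R, r2] 1).image (fun o => R.idxOf o)) ∩ range x).card
        ≤ ((((range m).filter (fun j => π.getD j 0 = 1))) ∩ range x).card) ∧
    ∀ o : Fin m, o ∈ SAalloc π ![R, r2] 1 ↔
      ∃ j ∈ (SAalloc π ![R, r2] 1).image (fun o => R.idxOf o), R[j]? = some o := by
  have hpref : ∀ a : Fin 2, IsRanking (![R, r2] a) := by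
    intro a
    rcases (tc_fin2 a) with rfl | rfl
    · simpa using hR
    · simpa using hr2
  obtain ⟨hlen, hfst, hnd, -, hidx⟩ :=
    tc_fwd π hπ ![R, r2] hpref π 0 [] (by simp) rfl List.nodup_nil
  set E := SAevents ![R, r2] π [] with hE
  rw [hπ] at hlen
  have hRlen := tc_ranking_length hR
  have hidx' : ∀ i (hi : i < E.length), E[i].1 = 0 → R.idxOf E[i].2 ≤ i := by
    intro i hi h0
    have := hidx i hi h0
    simpa using this
  have hinj := tc_snd_inj hnd
  have hall : ∀ o : Fin m, ∃ p ∈ E, p.2 = o := by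
    have hcard : (E.map Prod.snd).toFinset = Finset.univ := by
      apply Finset.eq_univ_of_card
      rw [List.toFinset_card_of_nodup hnd]
      simp [hlen]
    intro o
    have : o ∈ E.map Prod.snd := by
      rw [← List.mem_toFinset, hcard]; exact Finset.mem_univ o
    obtain ⟨p, hp, hp2⟩ := List.mem_map.1 this
    exact ⟨p, hp, hp2⟩
  have hBdef : SAalloc π ![R, r2] 1 = ((E.filter (fun p => p.1 == 1)).map Prod.snd).toFinset :=
    rfl
  set B := SAalloc π ![R, r2] 1 with hB
  set T0 := (range m).filter (fun j => π.getD j 0 = 1) with hT0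
  set T := B.image (fun o => R.idxOf o) with hT
  -- nodup of the filtered pick lists
  have hnd1 : ((E.filter (fun p => p.1 == 1)).map Prod.snd).Nodup :=
    hnd.sublist (List.Sublist.map _ (List.filter_sublist (l := E)))
  -- card of B
  have hcount := tc_countP_range π
  rw [hπ] at hcount
  have hBcard : B.card = T0.card := by
    rw [hBdef, List.toFinset_card_of_nodup hnd1, List.length_map,
      tc_filter_fst_len E (fun a => a == 1), hfst, hT0, hcount]
  have hTcard : T.card = T0.card := by
    rw [hT, tc_card_image_idx hR B, hBcard]
  have hTm : ∀ j ∈ T, j < m := by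
    intro j hj
    obtain ⟨o, ho, rfl⟩ := Finset.mem_image.1 hj
    have := List.idxOf_lt_length_iff.2 (hR.2 o)
    omega
  have hBo : ∀ o : Fin m, o ∈ B ↔ ∃ j ∈ T, R[j]? = some o := by
    intro o
    constructor
    · intro ho
      have hlt : R.idxOf o < R.length := List.idxOf_lt_length_iff.2 (hR.2 o)
      refine ⟨R.idxOf o, Finset.mem_image.2 ⟨o, ho, rfl⟩, ?_⟩
      rw [List.getElem?_eq_getElem hlt]
      exact congrArg some (List.getElem_idxOf hlt)
    · rintro ⟨j, hj, hjo⟩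
      obtain ⟨b, hb, rfl⟩ := Finset.mem_image.1 hj
      have hlt : R.idxOf b < R.length := List.idxOf_lt_length_iff.2 (hR.2 b)
      rw [List.getElem?_eq_getElem hlt] at hjo
      have : R[R.idxOf b] = b := List.getElem_idxOf hlt
      rw [this] at hjo
      obtain rfl := Option.some.injEq _ _ ▸ hjo
      exact hb
  refine ⟨hTcard, hTm, ?_, hBo⟩
  intro x
  by_cases hx : m ≤ x
  · rw [tc_inter_range_of_le hTm hx, tc_inter_range_of_le (fun j hj => by
      { rw [hT0] at hj; exact mem_range.1 (Finset.mem_filter.1 hj).1 }) hx, hTcard]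
  · push_neg at hx
    set A1 : Finset (Fin m) := ((E.filter (fun p => p.1 == 0)).map Prod.snd).toFinset with hA1
    set Bx := B.filter (fun o => R.idxOf o < x) with hBx
    set A1x := A1.filter (fun o => R.idxOf o < x) with hA1x
    set Ux := Finset.univ.filter (fun o : Fin m => R.idxOf o < x) with hUx
    have s1 : A1x ∪ Bx = Ux := by
      ext o
      simp only [hA1x, hBx, hUx, Finset.mem_union, Finset.mem_filter, Finset.mem_univ,
        true_and]
      constructor
      · rintro (⟨_, h⟩ | ⟨_, h⟩) <;> exact h
      · intro h
        obtain ⟨p, hp, hp2⟩ := hall o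
        rcases (tc_fin2 p.1) with h0 | h1
        · left
          refine ⟨List.mem_toFinset.2 (List.mem_map.2 ⟨p, List.mem_filter.2 ⟨hp, by simp [h0]⟩, hp2⟩), h⟩
        · right
          refine ⟨?_, h⟩
          rw [hBdef]
          exact List.mem_toFinset.2 (List.mem_map.2 ⟨p, List.mem_filter.2 ⟨hp, by simp [h1]⟩, hp2⟩)
    have s2 : Disjoint A1x Bx := by
      rw [Finset.disjoint_left]
      intro o ho ho'
      have h1 : o ∈ A1 := (Finset.mem_filter.1 ho).1
      have h2 : o ∈ B := (Finset.mem_filter.1 ho').1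
      rw [hA1] at h1
      rw [hBdef] at h2
      obtain ⟨p, hp, hp2⟩ := List.mem_map.1 (List.mem_toFinset.1 h1)
      obtain ⟨q, hq, hq2⟩ := List.mem_map.1 (List.mem_toFinset.1 h2)
      obtain ⟨hpE, hp0⟩ := List.mem_filter.1 hp
      obtain ⟨hqE, hq1⟩ := List.mem_filter.1 hq
      have := hinj p hpE q hqE (by rw [hp2, hq2])
      subst this
      simp at hp0 hq1
      rw [hp0] at hq1
      exact absurd hq1 (by decide)
    have s3 : Ux.card = x := tc_card_univ_lt hR (by omega)
    have s9 : A1x.card + Bx.card = x := by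
      rw [← Finset.card_union_of_disjoint s2, s1, s3]
    -- T ∩ range x = image of Bx
    have s4 : T ∩ range x = Bx.image (fun o => R.idxOf o) := by
      ext j
      simp only [hT, hBx, Finset.mem_inter, Finset.mem_image, mem_range, Finset.mem_filter]
      constructor
      · rintro ⟨⟨o, ho, rfl⟩, hj⟩
        exact ⟨o, ⟨ho, hj⟩, rfl⟩
      · rintro ⟨o, ⟨ho, hj⟩, rfl⟩
        exact ⟨⟨o, ho, rfl⟩, hj⟩
    have s4c : (T ∩ range x).card = Bx.card := by
      rw [s4, tc_card_image_idx hR Bx]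
    -- T0 ∩ range x
    have s5 : T0 ∩ range x = (range x).filter (fun j => π.getD j 0 = 1) := by
      ext j
      simp only [hT0, Finset.mem_inter, Finset.mem_filter, mem_range]
      constructor
      · rintro ⟨⟨h1, h2⟩, h3⟩; exact ⟨h3, h2⟩
      · rintro ⟨h1, h2⟩; exact ⟨⟨by omega, h2⟩, h1⟩
    have hcountx := tc_countP_range (π.take x)
    have htakelen : (π.take x).length = x := by
      rw [List.length_take]; omega
    have s6 : (T0 ∩ range x).card = ((π.take x).filter (fun a => a == 1)).length := by
      rw [s5, ← hcountx, htakelen]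
      congr 1
      apply Finset.filter_congr
      intro j hj
      rw [mem_range] at hj
      rw [List.getD_eq_getElem?_getD, List.getD_eq_getElem?_getD, List.getElem?_take, if_pos hj]
    -- the agent-0 picks among the first x events
    set W0 := ((E.take x).filter (fun p => p.1 == 0)).map Prod.snd with hW0
    have hW0nd : W0.Nodup :=
      hnd.sublist (List.Sublist.map _ ((List.filter_sublist (l := _)).trans (List.take_sublist x E)))
    have hW0len : W0.length = ((π.take x).filter (fun a => a == 0)).length := by
      rw [hW0, List.length_map, tc_filter_fst_len (E.take x) (fun a => a == 0),
        List.map_take, hfst]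
    have hW0sub : W0.toFinset ⊆ A1x := by
      intro o ho
      obtain ⟨p, hp, hp2⟩ := List.mem_map.1 (List.mem_toFinset.1 ho)
      obtain ⟨hpE, hp0⟩ := List.mem_filter.1 hp
      obtain ⟨i, hi, hip⟩ := List.getElem_of_mem hpE
      have hix : i < x := by
        have := hi; rw [List.length_take] at this; omega
      have hiE : i < E.length := by omega
      have hgt : (E.take x)[i] = E[i]'hiE := List.getElem_take
      rw [hA1x]
      refine Finset.mem_filter.2 ⟨?_, ?_⟩
      · rw [hA1]
        refine List.mem_toFinset.2 (List.mem_map.2 ⟨p, List.mem_filter.2 ⟨?_, hp0⟩, hp2⟩)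
        exact (List.take_subset x E) hpE
      · have h0 : E[i].1 = 0 := by
          rw [← hgt, hip]
          simpa using hp0
        have := hidx' i hiE h0
        rw [← hp2, ← hip, hgt]
        omega
    have s7 : W0.length ≤ A1x.card := by
      rw [← List.toFinset_card_of_nodup hW0nd]
      exact Finset.card_le_card hW0sub
    have s8 := tc_filter2 (π.take x)
    rw [htakelen] at s8
    rw [s4c, s6]
    omega

end TCForwardAssembly

section TCBackward

variable {m : ℕ}

/-- The items whose `R`-rank lies in `T`, in `R`-order. -/
def tcItems (R : List (Fin m)) (T : Finset ℕ) : List (Fin m) :=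
  R.filter (fun o => decide (R.idxOf o ∈ T))

/-- The remaining items, in `R`-order. -/
def tcRest (R : List (Fin m)) (T : Finset ℕ) : List (Fin m) :=
  R.filter (fun o => decide (R.idxOf o ∉ T))

/-- Agent 2's report: the `T`-items first, then the rest. -/
def tcR2 (R : List (Fin m)) (T : Finset ℕ) : List (Fin m) := tcItems R T ++ tcRest R T

/-- Number of agent-2 turns among the first `t` turns. -/
def tcK (π : List (Fin 2)) (t : ℕ) : ℕ :=
  ((range t).filter (fun j => π.getD j 0 = 1)).card

lemma tc_mem_tcItems {R : List (Fin m)} {T : Finset ℕ} (hR : IsRanking R) (o : Fin m) :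
    o ∈ tcItems R T ↔ R.idxOf o ∈ T := by
  rw [tcItems, List.mem_filter]
  simp [hR.2 o]

lemma tc_tcItems_nodup {R : List (Fin m)} {T : Finset ℕ} (hR : IsRanking R) :
    (tcItems R T).Nodup := hR.1.filter _

lemma tc_tcItems_subset {R : List (Fin m)} {T : Finset ℕ} {o : Fin m}
    (ho : o ∈ tcItems R T) : o ∈ R := List.mem_of_mem_filter ho

lemma tc_tcItems_pairwise {R : List (Fin m)} {T : Finset ℕ} (hR : IsRanking R) :
    (tcItems R T).Pairwise (fun a b => R.idxOf a < R.idxOf b) := by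
  have hp : R.Pairwise (fun a b => R.idxOf a < R.idxOf b) := by
    rw [List.pairwise_iff_getElem]
    intro i j hi hj hij
    rw [tc_indexOf_getElem hR.1 i hi, tc_indexOf_getElem hR.1 j hj]
    exact hij
  exact hp.sublist (List.filter_sublist (l := R))

lemma tc_card_univ_mem {R : List (Fin m)} (hR : IsRanking R) {T : Finset ℕ}
    (hTm : ∀ j ∈ T, j < m) :
    (Finset.univ.filter (fun o : Fin m => R.idxOf o ∈ T)).card = T.card := by
  have hRlen := tc_ranking_length hR
  have himg : (Finset.univ.filter (fun o : Fin m => R.idxOf o ∈ T)).image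
      (fun o => R.idxOf o) = T := by
    apply Finset.Subset.antisymm
    · intro j hj
      obtain ⟨o, ho, rfl⟩ := Finset.mem_image.1 hj
      exact (Finset.mem_filter.1 ho).2
    · intro j hj
      have hjR : j < R.length := by have := hTm j hj; omega
      refine Finset.mem_image.2 ⟨R[j], Finset.mem_filter.2 ⟨Finset.mem_univ _, ?_⟩, ?_⟩
      · rw [tc_indexOf_getElem hR.1 j hjR]; exact hj
      · exact tc_indexOf_getElem hR.1 j hjR
  have := tc_card_image_idx hR (Finset.univ.filter (fun o : Fin m => R.idxOf o ∈ T))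
  rw [himg] at this
  exact this.symm

lemma tc_tcItems_length {R : List (Fin m)} (hR : IsRanking R) {T : Finset ℕ}
    (hTm : ∀ j ∈ T, j < m) : (tcItems R T).length = T.card := by
  have h1 : (tcItems R T).toFinset = Finset.univ.filter (fun o : Fin m => R.idxOf o ∈ T) := by
    ext o
    rw [List.mem_toFinset, tc_mem_tcItems hR]
    simp
  rw [← List.toFinset_card_of_nodup (tc_tcItems_nodup hR), h1, tc_card_univ_mem hR hTm]

lemma tc_tcR2_ranking {R : List (Fin m)} {T : Finset ℕ} (hR : IsRanking R) :
    IsRanking (tcR2 R T) := by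
  constructor
  · rw [tcR2, List.nodup_append]
    refine ⟨hR.1.filter _, hR.1.filter _, ?_⟩
    intro o ho o' ho' hoo'
    subst hoo'
    obtain ⟨-, h1⟩ := List.mem_filter.1 ho
    obtain ⟨-, h2⟩ := List.mem_filter.1 ho'
    simp at h1 h2
    exact h2 h1
  · intro o
    rw [tcR2, List.mem_append]
    by_cases h : R.idxOf o ∈ T
    · exact Or.inl (List.mem_filter.2 ⟨hR.2 o, by simpa using h⟩)
    · exact Or.inr (List.mem_filter.2 ⟨hR.2 o, by simpa using h⟩)

lemma tc_tcK_succ (π : List (Fin 2)) (t : ℕ) :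
    tcK π (t+1) = tcK π t + (if π.getD t 0 = 1 then 1 else 0) := by
  rw [tcK, tcK, range_add_one, Finset.filter_insert]
  split
  · rw [Finset.card_insert_of_notMem (by simp)]
  · rw [add_zero]

lemma tc_tcK_mono (π : List (Fin 2)) {s t : ℕ} (h : s ≤ t) : tcK π s ≤ tcK π t :=
  Finset.card_le_card (Finset.filter_subset_filter _ (Finset.range_subset_range.2 h))

lemma tc_tcK_ge (π : List (Fin 2)) {t : ℕ} (hπt : π.length ≤ t) : tcK π t = tcK π π.length := by
  rw [tcK, tcK]
  congr 1
  ext j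
  simp only [Finset.mem_filter, mem_range]
  constructor
  · rintro ⟨h1, h2⟩
    refine ⟨?_, h2⟩
    by_contra h
    push_neg at h
    rw [List.getD_eq_default π 0 h] at h2
    exact absurd h2 (by decide)
  · rintro ⟨h1, h2⟩
    exact ⟨by omega, h2⟩

end TCBackward

section TCBwdMain

lemma tc_bwd {m : ℕ} (π : List (Fin 2)) (hπ : π.length = m) (R : List (Fin m))
    (hR : IsRanking R) (T : Finset ℕ) (hTm : ∀ j ∈ T, j < m)
    (hcard : T.card = ((range m).filter (fun j => π.getD j 0 = 1)).card)
    (hpre : ∀ x, (T ∩ range x).card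
        ≤ (((range m).filter (fun j => π.getD j 0 = 1)) ∩ range x).card) :
    ∀ (L : List (Fin 2)) (t : ℕ) (tk : List (Fin m)), π.drop t = L → tk.length = t →
      tk.Nodup →
      (∀ o ∈ tk, R.idxOf o ∈ T → o ∈ (tcItems R T).take (tcK π t)) →
      (∀ o ∈ (tcItems R T).take (tcK π t), o ∈ tk) →
      ((SAevents ![R, tcR2 R T] L tk).filter (fun p => p.1 == 1)).map Prod.snd
        = (tcItems R T).drop (tcK π t) := by
  have hRlen := tc_ranking_length hR
  have hlenI : (tcItems R T).length = T.card := tc_tcItems_length hR hTm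
  have hKm : tcK π m = T.card := by
    rw [tcK, hcard]
  intro L
  induction L with
  | nil =>
    intro t tk hdrop htl htnd hinv1 hinv2
    have htm : m ≤ t := by
      have h1 : (π.drop t).length = 0 := by rw [hdrop]; rfl
      rw [List.length_drop, hπ] at h1
      omega
    have hK : tcK π t = T.card := by
      have := tc_tcK_ge π (t := t) (by omega)
      rw [hπ] at this
      rw [this, hKm]
    rw [SAevents]
    rw [List.drop_eq_nil_iff.2 (by omega)]
    rfl
  | cons a L ih =>
    intro t tk hdrop htl htnd hinv1 hinv2
    have htm : t < m := by
      have h1 : (π.drop t).length = L.length + 1 := by rw [hdrop]; simp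
      rw [List.length_drop, hπ] at h1
      omega
    have hget : π[t]? = some a := by
      have h := List.getElem?_drop (xs := π) (i := t) (j := 0)
      rw [hdrop] at h
      simpa using h.symm
    have hagetD : π.getD t 0 = a := by
      rw [List.getD_eq_getElem?_getD, hget]
      rfl
    have hdrop' : π.drop (t+1) = L := by
      have h := congrArg List.tail hdrop
      rw [List.tail_drop] at h
      simpa using h
    have hkle : tcK π t ≤ (tcItems R T).length := by
      rw [hlenI, ← hKm, ← hπ]
      exact tc_tcK_mono π (by omega)
    rcases tc_fin2 a with rfl | rfl
    -- agent 1 (index 0) picks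
    · obtain ⟨x, hx⟩ := tc_exists_pick R hR.2 tk (by omega)
      obtain ⟨l1, l2, hdec, hl1, hpx⟩ := tc_head?_filter_decomp _ _ _ hx
      have hxtk : x ∉ tk := by simpa using hpx
      have hnd0 : R.Nodup := hR.1
      have hndapp := hnd0
      rw [hdec, List.nodup_append] at hndapp
      have hxl1 : x ∉ l1 := fun hx1 => hndapp.2.2 x hx1 x List.mem_cons_self rfl
      have hidxx : R.idxOf x = l1.length := by
        rw [hdec, List.idxOf_append_of_notMem hxl1]
        simp
      have hl1t : l1.length ≤ t := by
        have hsub : l1.toFinset ⊆ tk.toFinset := by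
          intro y hy
          rw [List.mem_toFinset] at hy ⊢
          have := hl1 y hy
          simpa using this
        have h1 : l1.toFinset.card = l1.length := List.toFinset_card_of_nodup hndapp.1
        have h2 := tk.toFinset_card_le
        have h3 := Finset.card_le_card hsub
        omega
      -- the picked item's rank is not in T
      have hxT : R.idxOf x ∉ T := by
        intro hxT
        set k := tcK π t with hk
        set items := tcItems R T with hitems
        have hxitems : x ∈ items := (tc_mem_tcItems hR x).2 hxT
        have hxnotake : x ∉ items.take k := fun h => hxtk (hinv2 x h)
        have hxdrop : x ∈ items.drop k := by
          have h := hxitems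
          rw [← List.take_append_drop k items, List.mem_append] at h
          tauto
        have hP := tc_tcItems_pairwise hR (T := T)
        rw [← hitems, ← List.take_append_drop k items, List.pairwise_append] at hP
        have hlt : ∀ y ∈ items.take k, R.idxOf y < R.idxOf x :=
          fun y hy => hP.2.2 y hy x hxdrop
        -- lower bound on T ∩ range (l1.length + 1)
        have htaked : (items.take k).Nodup := (tc_tcItems_nodup hR).sublist (List.take_sublist _ _)
        have htakelen : (items.take k).length = k := by
          rw [List.length_take]
          omega
        set Sk := ((items.take k).toFinset).image (fun o => R.idxOf o) with hSk
        have hSkcard : Sk.card = k := by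
          rw [hSk, tc_card_image_idx hR, List.toFinset_card_of_nodup htaked, htakelen]
        have hxSk : R.idxOf x ∉ Sk := by
          intro hmem
          obtain ⟨o, ho, hoe⟩ := Finset.mem_image.1 hmem
          have := hlt o (List.mem_toFinset.1 ho)
          omega
        have hsub : insert (R.idxOf x) Sk ⊆ T ∩ range (l1.length + 1) := by
          intro j hj
          rcases Finset.mem_insert.1 hj with rfl | hj
          · exact Finset.mem_inter.2 ⟨hxT, mem_range.2 (by omega)⟩
          · obtain ⟨o, ho, rfl⟩ := Finset.mem_image.1 hj
            have h1 : R.idxOf o ∈ T := by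
              have := List.mem_of_mem_take (List.mem_toFinset.1 ho)
              exact (tc_mem_tcItems hR o).1 (hitems ▸ this)
            have h2 := hlt o (List.mem_toFinset.1 ho)
            exact Finset.mem_inter.2 ⟨h1, mem_range.2 (by omega)⟩
        have hlow : k + 1 ≤ (T ∩ range (l1.length + 1)).card := by
          have := Finset.card_le_card hsub
          rw [Finset.card_insert_of_notMem hxSk, hSkcard] at this
          exact this
        -- upper bound
        have hupp : (((range m).filter (fun j => π.getD j 0 = 1)) ∩ range (l1.length + 1)).card
            ≤ k := by
          apply Finset.card_le_card (t := (range t).filter (fun j => π.getD j 0 = 1))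
          intro j hj
          obtain ⟨hj1, hj2⟩ := Finset.mem_inter.1 hj
          obtain ⟨hj3, hj4⟩ := Finset.mem_filter.1 hj1
          rw [mem_range] at hj2
          refine Finset.mem_filter.2 ⟨mem_range.2 ?_, hj4⟩
          rcases (show j < t ∨ j = t by omega) with h | rfl
          · exact h
          · rw [hagetD] at hj4
            exact absurd hj4 (by decide)
        have := hpre (l1.length + 1)
        omega
      -- step
      have hK' : tcK π (t+1) = tcK π t := by
        rw [tc_tcK_succ, hagetD, if_neg (by decide), add_zero]
      have hres := ih (t+1) (x :: tk) hdrop' (by simp [htl])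
        (List.nodup_cons.2 ⟨hxtk, htnd⟩)
        (by
          intro o ho hoT
          rcases List.mem_cons.1 ho with rfl | ho
          · exact absurd hoT hxT
          · rw [hK']
            exact hinv1 o ho hoT)
        (by
          intro o ho
          rw [hK'] at ho
          exact List.mem_cons_of_mem x (hinv2 o ho))
      rw [SAevents]
      simp only [Matrix.cons_val_zero]
      rw [hx]
      rw [List.filter_cons_of_neg (by simp)]
      rw [hres, hK']
    -- agent 2 (index 1) picks
    · set k := tcK π t with hk
      set items := tcItems R T with hitems
      have hK' : tcK π (t+1) = k + 1 := by
        rw [tc_tcK_succ, hagetD, if_pos rfl]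
      have hkl : k < items.length := by
        have h1 : tcK π (t+1) ≤ tcK π m := by
          rw [← hπ]
          exact tc_tcK_mono π (by omega)
        rw [hK', hKm, ← hlenI] at h1
        omega
      set x := items[k] with hxdef
      have hxitems : x ∈ items := List.getElem_mem hkl
      have hxT : R.idxOf x ∈ T := (tc_mem_tcItems hR x).1 hxitems
      have hxtk : x ∉ tk := by
        intro hxtk
        have hxtake := hinv1 x hxtk hxT
        obtain ⟨i, hi, hie⟩ := List.getElem_of_mem hxtake
        have hik : i < k := by
          have := hi
          rw [List.length_take] at this
          omega
        have hgt : (items.take k)[i] = items[i]'(by omega) := List.getElem_take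
        rw [hgt] at hie
        have := ((tc_tcItems_nodup hR (T := T)).getElem_inj_iff).1 (hie.trans hxdef)
        omega
      have hsplit : tcR2 R T = items.take k ++ (x :: (items.drop (k+1) ++ tcRest R T)) := by
        calc tcR2 R T = items ++ tcRest R T := rfl
          _ = (items.take k ++ items.drop k) ++ tcRest R T := by rw [List.take_append_drop]
          _ = (items.take k ++ (x :: items.drop (k+1))) ++ tcRest R T := by
              rw [← List.drop_eq_getElem_cons hkl]
          _ = items.take k ++ (x :: (items.drop (k+1) ++ tcRest R T)) := by
              rw [List.append_assoc, List.cons_append]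
      have hx' : ((tcR2 R T).filter (fun o => !tk.contains o)).head? = some x := by
        rw [hsplit]
        apply tc_head?_filter_eq
        · intro y hy
          have := hinv2 y hy
          simp [this]
        · simp [hxtk]
      have htakesucc : items.take (k+1) = items.take k ++ [x] := by
        rw [List.take_succ, List.getElem?_eq_getElem hkl]
        rfl
      have hres := ih (t+1) (x :: tk) hdrop' (by simp [htl])
        (List.nodup_cons.2 ⟨hxtk, htnd⟩)
        (by
          intro o ho hoT
          rw [hK', htakesucc]
          rcases List.mem_cons.1 ho with rfl | ho
          · exact List.mem_append_right _ (List.mem_singleton.2 rfl)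
          · exact List.mem_append_left _ (hinv1 o ho hoT))
        (by
          intro o ho
          rw [hK', htakesucc, List.mem_append] at ho
          rcases ho with ho | ho
          · exact List.mem_cons_of_mem x (hinv2 o ho)
          · rw [List.mem_singleton.1 ho]
            exact List.mem_cons_self)
      rw [SAevents]
      simp only [Matrix.cons_val_one, Matrix.head_cons, Matrix.cons_val_zero]
      rw [hx']
      rw [List.filter_cons_of_pos (by simp)]
      rw [List.map_cons, hres, hK']
      exact (List.drop_eq_getElem_cons hkl).symm

end TCBwdMain

/-- Token characterization of agent 2's achievable allocations against a
fixed leader ranking `R`: achievable sets are exactly the images of token positions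
obtainable from the positions of "2" in the picking sequence by moving tokens to
later free positions. -/
theorem token_characterization {m : ℕ} (π : List (Fin 2)) (R : List (Fin m))
    (hπ : π.length = m) (hR : IsRanking R) (B : Finset (Fin m)) :
    (∃ r2 : List (Fin m), IsRanking r2 ∧ SAalloc π ![R, r2] 1 = B) ↔
      ∃ T : Finset ℕ,
        Relation.ReflTransGen (MoveStep m)
          ((Finset.range m).filter (fun j => π.getD j 0 = 1)) T ∧
        T.card = ((Finset.range m).filter (fun j => π.getD j 0 = 1)).card ∧
        ∀ o : Fin m, o ∈ B ↔ ∃ j ∈ T, R[j]? = some o := by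
  have hT0m : ∀ j ∈ (Finset.range m).filter (fun j => π.getD j 0 = 1), j < m :=
    fun j hj => mem_range.1 (Finset.mem_filter.1 hj).1
  have hRlen := tc_ranking_length hR
  constructor
  · rintro ⟨r2, hr2, hB⟩
    obtain ⟨hc, hb, hp, ho⟩ := tc_forward π hπ R r2 hR hr2
    refine ⟨(SAalloc π ![R, r2] 1).image (fun o => R.idxOf o), ?_, hc, ?_⟩
    · exact tc_dom_reach _ hb _ _ hT0m hc hp le_rfl
    · intro o
      rw [← hB]
      exact ho o
  · rintro ⟨T, hreach, hcard, hBo⟩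
    obtain ⟨hc, hb, hp⟩ := tc_reach_dom hreach hT0m
    refine ⟨tcR2 R T, tc_tcR2_ranking hR, ?_⟩
    have hbwd := tc_bwd π hπ R hR T hb hc hp π 0 [] (by simp) rfl List.nodup_nil
      (by simp) (by simp [tcK])
    have h0 : tcK π 0 = 0 := by simp [tcK]
    rw [h0, List.drop_zero] at hbwd
    have hAl : SAalloc π ![R, tcR2 R T] 1 = (tcItems R T).toFinset := by
      unfold SAalloc
      rw [hbwd]
    rw [hAl]
    ext o
    rw [List.mem_toFinset, tc_mem_tcItems hR, hBo o]
    constructor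
    · intro hoT
      have hlt : R.idxOf o < R.length := List.idxOf_lt_length_iff.2 (hR.2 o)
      refine ⟨R.idxOf o, hoT, ?_⟩
      rw [List.getElem?_eq_getElem hlt]
      exact congrArg some (List.getElem_idxOf hlt)
    · rintro ⟨j, hj, hjo⟩
      obtain ⟨hjR, hjo'⟩ := List.getElem?_eq_some_iff.1 hjo
      rw [← hjo', tc_indexOf_getElem hR.1 j hjR]
      exact hj
end
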